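/- arXiv:2102.04598 — 13 statements merged into one kernel-verified Lean document; each statement's English description precedes it below -/
import Mathlib

section
/- A subgroup H of a finite group G is isolated in G if and only if ψ_H(G) = |H| + ψ(G) - ψ(H), where ψ_H(G) = Σ_{x∈G} o_H(x) and ψ(G) = Σ_{x∈G} o(x). -/
/-- `H` is isolated in `G`: every `x ∈ G` is in `H` or `⟨x⟩ ∩ H = 1`. -/
def Subgroup.IsIsolated {G : Type*} [Group G] (H : Subgroup G) : Prop :=
  ∀ x : G, x ∈ H ∨ Subgroup.zpowers x ⊓ H = ⊥

/-- `o_H(x)`: the smallest positive `m` with `x ^ m ∈ H`. -/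
noncomputable def relOrder {G : Type*} [Group G] (H : Subgroup G) (x : G) : ℕ :=
  sInf {m : ℕ | 0 < m ∧ x ^ m ∈ H}

/-- `ψ(G)`: the sum of the orders of the elements of `G`. -/
noncomputable def psi (G : Type*) [Group G] [Fintype G] : ℕ :=
  ∑ x : G, orderOf x

section Aux

variable {G : Type*} [Group G] [Fintype G] (H : Subgroup G)

lemma relOrder_spec (x : G) : 0 < relOrder H x ∧ x ^ relOrder H x ∈ H := by
  have hmem : orderOf x ∈ {m : ℕ | 0 < m ∧ x ^ m ∈ H} :=
    ⟨orderOf_pos x, by simp [pow_orderOf_eq_one x, H.one_mem]⟩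
  exact Nat.sInf_mem ⟨_, hmem⟩

lemma relOrder_le_orderOf (x : G) : relOrder H x ≤ orderOf x :=
  Nat.sInf_le ⟨orderOf_pos x, by simp [pow_orderOf_eq_one x, H.one_mem]⟩

lemma relOrder_of_mem {x : G} (hx : x ∈ H) : relOrder H x = 1 :=
  le_antisymm (Nat.sInf_le ⟨one_pos, by simpa using hx⟩) (relOrder_spec H x).1

lemma relOrder_eq_orderOf_iff (x : G) :
    relOrder H x = orderOf x ↔ Subgroup.zpowers x ⊓ H = ⊥ := by
  constructor
  · intro h
    rw [Subgroup.eq_bot_iff_forall]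
    intro y hy
    obtain ⟨hy1, hy2⟩ := Subgroup.mem_inf.mp hy
    by_contra hne
    obtain ⟨n, hn⟩ := (mem_powers_iff_mem_zpowers).mpr hy1
    have hn' : x ^ n = y := hn
    have hmod : x ^ (n % orderOf x) = y := by rw [pow_mod_orderOf, hn']
    have hpos : 0 < n % orderOf x := by
      rcases Nat.eq_zero_or_pos (n % orderOf x) with h0 | h0
      · exact absurd (by rw [← hmod, h0, pow_zero]) (Ne.symm hne)
      · exact h0
    have hlt : n % orderOf x < orderOf x := Nat.mod_lt _ (orderOf_pos x)
    have : relOrder H x ≤ n % orderOf x :=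
      Nat.sInf_le ⟨hpos, by rw [hmod]; exact hy2⟩
    omega
  · intro h
    refine le_antisymm (relOrder_le_orderOf H x) ?_
    obtain ⟨hpos, hmem⟩ := relOrder_spec H x
    have hx : x ^ relOrder H x = 1 := by
      have : x ^ relOrder H x ∈ Subgroup.zpowers x ⊓ H :=
        Subgroup.mem_inf.mpr ⟨Subgroup.pow_mem _ (Subgroup.mem_zpowers x) _, hmem⟩
      rw [h] at this
      simpa using this
    exact Nat.le_of_dvd hpos (orderOf_dvd_of_pow_eq_one hx)

end Aux

open scoped Classical in
theorem stmt0 {G : Type*} [Group G] [Fintype G] (H : Subgroup G) :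
    H.IsIsolated ↔
      ((∑ x : G, relOrder H x : ℤ) =
        (Nat.card H : ℤ) + (psi G : ℤ) - (∑ x : H, orderOf (x : G) : ℤ)) := by
  classical
  set F : Finset G := Finset.univ.filter (· ∈ H) with hF
  set Fc : Finset G := Finset.univ.filter (· ∉ H) with hFc
  have hsplit : ∀ g : G → ℕ, ∑ x : G, g x = ∑ x ∈ F, g x + ∑ x ∈ Fc, g x := by
    intro g
    rw [hF, hFc, Finset.sum_filter_add_sum_filter_not]
  have hpsiH : (∑ x : H, orderOf (x : G)) = ∑ x ∈ F, orderOf x := by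
    refine (Finset.sum_subtype F (fun x => by simp [hF]) (fun x => orderOf x)).symm
  have hcard : Nat.card H = F.card := by
    rw [hF, Nat.card_eq_fintype_card]
    simpa using Fintype.card_subtype (· ∈ H)
  have hFone : ∑ x ∈ F, relOrder H x = F.card := by
    rw [Finset.card_eq_sum_ones]
    refine Finset.sum_congr rfl fun x hx => ?_
    exact relOrder_of_mem H (by simpa [hF] using hx)
  have key : (∑ x ∈ Fc, relOrder H x = ∑ x ∈ Fc, orderOf x) ↔ H.IsIsolated := by
    rw [Finset.sum_eq_sum_iff_of_le (fun x _ => relOrder_le_orderOf H x)]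
    constructor
    · intro h x
      by_cases hx : x ∈ H
      · exact Or.inl hx
      · exact Or.inr ((relOrder_eq_orderOf_iff H x).mp
          (h x (by simp [hFc, hx])))
    · intro h x hx
      have hx' : x ∉ H := by simpa [hFc] using hx
      rcases h x with h1 | h1
      · exact absurd h1 hx'
      · exact (relOrder_eq_orderOf_iff H x).mpr h1
  rw [← key]
  have hψ : psi G = ∑ x ∈ F, orderOf x + ∑ x ∈ Fc, orderOf x := hsplit _
  have hrel : ∑ x : G, relOrder H x = F.card + ∑ x ∈ Fc, relOrder H x := by
    rw [hsplit, hFone]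
  have h1 : (∑ x : G, (relOrder H x : ℤ)) =
      (F.card : ℤ) + ∑ x ∈ Fc, (relOrder H x : ℤ) := by exact_mod_cast hrel
  have h2 : (psi G : ℤ) = ∑ x ∈ F, (orderOf x : ℤ) + ∑ x ∈ Fc, (orderOf x : ℤ) := by
    exact_mod_cast hψ
  have h3 : (∑ x : H, (orderOf (x : G) : ℤ)) = ∑ x ∈ F, (orderOf x : ℤ) := by
    exact_mod_cast hpsiH
  rw [h1, h2, h3, hcard]
  constructor
  · intro h
    have h' : (∑ x ∈ Fc, (relOrder H x : ℤ)) = ∑ x ∈ Fc, (orderOf x : ℤ) := by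
      exact_mod_cast h
    linarith
  · intro h
    have h' : (∑ x ∈ Fc, (relOrder H x : ℤ)) = ∑ x ∈ Fc, (orderOf x : ℤ) := by linarith
    exact_mod_cast h'
end

section
/- For a normal subgroup H of a finite group G, ψ_H(G) = |H| · ψ(G/H), where ψ_H(G) = Σ_{x∈G} o_H(x) and ψ is the sum of element orders. -/
lemma relOrder_eq_orderOf_mk {G : Type*} [Group G] [Fintype G] (H : Subgroup G) [H.Normal]
    (x : G) : relOrder H x = orderOf (QuotientGroup.mk x : G ⧸ H) := by
  have hset : {m : ℕ | 0 < m ∧ x ^ m ∈ H} =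
      {m : ℕ | 0 < m ∧ (QuotientGroup.mk x : G ⧸ H) ^ m = 1} := by
    ext m
    simp [← QuotientGroup.mk_pow, QuotientGroup.eq_one_iff]
  have hfin : IsOfFinOrder (QuotientGroup.mk x : G ⧸ H) := by
    have : Finite (G ⧸ H) := Quotient.finite _
    exact isOfFinOrder_of_finite _
  have hmem : orderOf (QuotientGroup.mk x : G ⧸ H) ∈
      {m : ℕ | 0 < m ∧ (QuotientGroup.mk x : G ⧸ H) ^ m = 1} :=
    ⟨hfin.orderOf_pos, pow_orderOf_eq_one _⟩
  rw [relOrder, hset]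
  refine le_antisymm (Nat.sInf_le hmem) ?_
  have h2 := Nat.sInf_mem (⟨_, hmem⟩ : Set.Nonempty _)
  exact orderOf_le_of_pow_eq_one h2.1 h2.2

theorem stmt1 {G : Type*} [Group G] [Fintype G] (H : Subgroup G) [H.Normal]
    [Fintype (G ⧸ H)] :
    ∑ x : G, relOrder H x = Nat.card H * ∑ y : G ⧸ H, orderOf y := by
  classical
  calc ∑ x : G, relOrder H x
      = ∑ x : G, orderOf (QuotientGroup.mk x : G ⧸ H) := by
        simp [relOrder_eq_orderOf_mk]
    _ = ∑ y : G ⧸ H, ∑ _x ∈ Finset.univ.filter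
          (fun x : G => (QuotientGroup.mk x : G ⧸ H) = y), orderOf y :=
        (Finset.sum_fiberwise' _ _ _).symm
    _ = ∑ y : G ⧸ H, Nat.card H * orderOf y := by
        refine Finset.sum_congr rfl fun y _ => ?_
        rw [Finset.sum_const, smul_eq_mul]
        congr 1
        have : (Finset.univ.filter
            (fun x : G => (QuotientGroup.mk x : G ⧸ H) = y)).card
            = Fintype.card {x : G // (QuotientGroup.mk x : G ⧸ H) = y} :=
          (Fintype.card_subtype _).symm
        rw [this, ← Nat.card_eq_fintype_card]
        have e1 : {x : G // (QuotientGroup.mk x : G ⧸ H) = y} ≃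
            (QuotientGroup.mk ⁻¹' ({y} : Set (G ⧸ H))) :=
          Equiv.subtypeEquivRight (by simp)
        have e2 := QuotientGroup.preimageMkEquivSubgroupProdSet H ({y} : Set (G ⧸ H))
        rw [Nat.card_congr (e1.trans e2), Nat.card_prod]
        simp
    _ = Nat.card H * ∑ y : G ⧸ H, orderOf y := by
        rw [Finset.mul_sum]
end

section
/- A normal subgroup H of a finite group G is isolated in G if and only if ψ(G) - ψ(H) = |H| · (ψ(G/H) - 1). -/
/-!
Split both sides over `G \ H`. On the left, `ψ(G) - ∑_{x ∈ H} o(x) = ∑_{x ∉ H} o(x)`. On the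
right, every coset of `H` has `|H|` elements, so `|H| · ψ(G/H) = ∑_{x ∈ G} o(xH)`, and the
elements of `H` contribute `|H|` to this sum; hence `|H| · (ψ(G/H) - 1) = ∑_{x ∉ H} o(xH)`.
Since `o(xH)` divides `o(x)`, the two sums agree iff `o(xH) = o(x)` for every `x ∉ H`, and
`o(xH) = o(x)` says exactly that `⟨x⟩ ∩ H` is trivial.
-/

open Finset

namespace QuotientGroup

variable {G : Type*} [Group G]

theorem sum_comp_mk [Fintype G] {M : Type*} [AddCommMonoid M] (H : Subgroup G)
    [Fintype (G ⧸ H)] (f : G ⧸ H → M) :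
    ∑ x : G, f x = Nat.card H • ∑ y : G ⧸ H, f y := by
  classical
  rw [← Fintype.sum_fiberwise' (fun x : G => (x : G ⧸ H)) f, smul_sum]
  refine sum_congr rfl fun y _ => ?_
  have hfiber : Nat.card {x : G // (x : G ⧸ H) = y} = Nat.card H :=
    (card_preimage_mk H {y}).trans (by simp)
  rw [sum_const, card_univ, ← Nat.card_eq_fintype_card, hfiber]

variable (H : Subgroup G) [H.Normal]

theorem orderOf_mk_dvd (x : G) : orderOf (x : G ⧸ H) ∣ orderOf x :=
  orderOf_map_dvd (mk' H) x

theorem orderOf_mk_eq_orderOf_iff (x : G) :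
    orderOf (x : G ⧸ H) = orderOf x ↔ Subgroup.zpowers x ⊓ H = ⊥ := by
  constructor
  · intro h
    rw [Subgroup.eq_bot_iff_forall]
    rintro _ ⟨⟨k, rfl⟩, hk⟩
    have hk' : (x : G ⧸ H) ^ k = 1 := by rwa [← mk_zpow, eq_one_iff]
    rw [← orderOf_dvd_iff_zpow_eq_one, h] at hk'
    exact orderOf_dvd_iff_zpow_eq_one.mp hk'
  · intro h
    have hmem : x ^ orderOf (x : G ⧸ H) ∈ Subgroup.zpowers x ⊓ H := Subgroup.mem_inf.mpr
      ⟨Subgroup.npow_mem_zpowers x _, by rw [← eq_one_iff, mk_pow, pow_orderOf_eq_one]⟩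
    rw [h, Subgroup.mem_bot] at hmem
    exact (orderOf_mk_dvd H x).antisymm (orderOf_dvd_of_pow_eq_one hmem)

end QuotientGroup

section

variable {G : Type*} [Group G] [Fintype G] (H : Subgroup G) [DecidablePred (· ∈ H)]

theorem psi_sub_sum_orderOf_subgroup :
    (psi G : ℤ) - ∑ x : H, (orderOf (x : G) : ℤ) = ∑ x : {x // x ∉ H}, (orderOf (x : G) : ℤ) := by
  rw [psi, Nat.cast_sum, ← Fintype.sum_subtype_add_sum_subtype (· ∈ H)]
  exact add_sub_cancel_left _ _

theorem card_mul_psi_quotient_sub_one [H.Normal] [Fintype (G ⧸ H)] :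
    (Nat.card H : ℤ) * (∑ y : G ⧸ H, (orderOf y : ℤ) - 1) =
      ∑ x : {x // x ∉ H}, (orderOf (x : G ⧸ H) : ℤ) := by
  have hH : ∑ x : H, (orderOf (x : G ⧸ H) : ℤ) = Nat.card H := by
    simp [(QuotientGroup.eq_one_iff _).mpr, Nat.card_eq_fintype_card]
  rw [mul_sub, mul_one, ← nsmul_eq_mul, ← QuotientGroup.sum_comp_mk H, ← hH,
    ← Fintype.sum_subtype_add_sum_subtype (· ∈ H)]
  exact add_sub_cancel_left _ _

end

open scoped Classical in
theorem stmt2 {G : Type*} [Group G] [Fintype G] (H : Subgroup G) [H.Normal]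
    [Fintype (G ⧸ H)] :
    H.IsIsolated ↔
      ((psi G : ℤ) - (∑ x : H, orderOf (x : G) : ℤ) =
        (Nat.card H : ℤ) * ((∑ y : G ⧸ H, orderOf y : ℤ) - 1)) := by
  have hle : ∀ x : {x // x ∉ H}, (orderOf (x : G ⧸ H) : ℤ) ≤ orderOf (x : G) := fun x =>
    Nat.cast_le.mpr (Nat.le_of_dvd (orderOf_pos _) (QuotientGroup.orderOf_mk_dvd H x))
  rw [psi_sub_sum_orderOf_subgroup, card_mul_psi_quotient_sub_one, eq_comm,
    sum_eq_sum_iff_of_le fun x _ => hle x]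
  simp only [mem_univ, true_implies, Nat.cast_inj, QuotientGroup.orderOf_mk_eq_orderOf_iff,
    Subtype.forall]
  exact forall_congr' fun x => or_iff_not_imp_left
end

section
/- If H is a maximal subgroup of a finite abelian p-group G and H is isolated in G, then G is elementary abelian (every nontrivial element has order p). -/
theorem stmt5 {p : ℕ} (hp : p.Prime) {G : Type*} [CommGroup G] [Finite G]
    (hG : IsPGroup p G) (H : Subgroup G) (hmax : IsCoatom H) (hiso : H.IsIsolated) :
    ∀ x : G, x ^ p = 1 := by
  have hpfact : Fact p.Prime := ⟨hp⟩
  -- The quotient is a nontrivial p-group, so p divides its card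
  have hQ : IsPGroup p (G ⧸ H) := IsPGroup.to_quotient hG H
  have hne : H ≠ ⊤ := hmax.1
  have hnotall : ¬ ∀ x : G, x ∈ H := fun h => hne ((Subgroup.eq_top_iff' H).mpr h)
  push_neg at hnotall
  obtain ⟨w, hwH⟩ := hnotall
  have hQnt : Nontrivial (G ⧸ H) :=
    ⟨⟨(w : G ⧸ H), 1, by simpa [QuotientGroup.eq_one_iff] using hwH⟩⟩
  obtain ⟨n, hn⟩ := IsPGroup.iff_card.mp hQ
  have hpdvd : p ∣ Nat.card (G ⧸ H) := by
    rcases n with _ | n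
    · simp at hn
      exact absurd (Nat.card_eq_one_iff_unique.mp hn).1 (not_subsingleton _)
    · exact hn ▸ dvd_pow_self p n.succ_ne_zero
  obtain ⟨g, hg⟩ := exists_prime_orderOf_dvd_card' p hpdvd
  -- preimage of ⟨g⟩ is above H, hence = ⊤; so every x satisfies x^p ∈ H
  have hgen : ∀ x : G, x ^ p ∈ H := by
    intro x
    set K := Subgroup.comap (QuotientGroup.mk' H) (Subgroup.zpowers g) with hK
    have hHK : H < K := by
      constructor
      · intro h hh
        have : ((h : G) : G ⧸ H) = 1 := (QuotientGroup.eq_one_iff h).mpr hh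
        rw [hK]
        refine Subgroup.mem_comap.mpr ?_
        rw [QuotientGroup.mk'_apply, this]
        exact Subgroup.one_mem _
      · intro hle
        obtain ⟨y, hy⟩ := QuotientGroup.mk'_surjective H g
        have : y ∈ K := by simp [hK, Subgroup.mem_comap, hy, Subgroup.mem_zpowers]
        have hyH : y ∈ H := hle this
        have : g = 1 := by
          rw [← hy, QuotientGroup.mk'_apply, QuotientGroup.eq_one_iff]; exact hyH
        rw [this] at hg
        simpa [hg.symm] using hp.one_lt.ne'
    have hKtop : K = ⊤ := hmax.2 K hHK
    have hx : (x : G ⧸ H) ∈ Subgroup.zpowers g := by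
      have : x ∈ K := hKtop ▸ Subgroup.mem_top x
      simpa [hK, Subgroup.mem_comap] using this
    obtain ⟨m, hm⟩ := Subgroup.mem_zpowers_iff.mp hx
    have : ((x : G ⧸ H)) ^ p = 1 := by
      rw [← hm, ← zpow_natCast, ← zpow_mul, mul_comm, zpow_mul]
      norm_num
      rw [← hg]
      simp [pow_orderOf_eq_one]
    rwa [← QuotientGroup.mk_pow, QuotientGroup.eq_one_iff] at this
  -- elements outside H have p-th power 1
  have hout : ∀ x : G, x ∉ H → x ^ p = 1 := by
    intro x hx
    rcases hiso x with h | h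
    · exact absurd h hx
    · have : x ^ p ∈ Subgroup.zpowers x ⊓ H :=
        ⟨Subgroup.pow_mem _ (Subgroup.mem_zpowers x) p, hgen x⟩
      rw [h] at this
      simpa using this
  intro x
  by_cases hx : x ∈ H
  · obtain ⟨y, hyH⟩ : ∃ y : G, y ∉ H := ⟨w, hwH⟩
    have hxy : y * x ∉ H := fun h => hyH (by
      have := H.mul_mem h (H.inv_mem hx); simpa using this)
    have h1 := hout _ hxy
    have h2 := hout _ hyH
    rw [mul_pow, h2, one_mul] at h1
    exact h1
  · exact hout x hx
end

section
/- If H is an isolated proper subgroup of a finite abelian p-group G, then H is contained in Ω₁(G) = {x ∈ G : x^p = 1}; in fact H is strictly contained in Ω₁(G). -/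
/-- `Ω₁(G)`: the subgroup of elements `x` with `x ^ p = 1` of an abelian group. -/
def omega1 (p : ℕ) {G : Type*} [CommGroup G] : Subgroup G where
  carrier := {x | x ^ p = 1}
  one_mem' := one_pow p
  mul_mem' := by
    intro a b ha hb
    simp only [Set.mem_setOf_eq] at *
    rw [mul_pow, ha, hb, one_mul]
  inv_mem' := by
    intro a ha
    simp only [Set.mem_setOf_eq] at *
    rw [inv_pow, ha, inv_one]

theorem stmt6 {p : ℕ} (hp : p.Prime) {G : Type*} [CommGroup G] [Finite G]
    (hG : IsPGroup p G) (H : Subgroup G) (hiso : H.IsIsolated) (hne : H ≠ ⊤) :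
    H < omega1 p := by
  obtain ⟨x, hxH⟩ : ∃ x : G, x ∉ H := by
    by_contra h
    push_neg at h
    exact hne ((Subgroup.eq_top_iff' H).mpr h)
  have hbot : Subgroup.zpowers x ⊓ H = ⊥ := (hiso x).resolve_left hxH
  obtain ⟨k, hk⟩ := hG x
  obtain ⟨m, _, hm⟩ := (Nat.dvd_prime_pow hp).mp (orderOf_dvd_of_pow_eq_one hk)
  have hx1 : x ≠ 1 := fun h => hxH (h ▸ H.one_mem)
  have hm1 : 1 ≤ m := by
    rcases Nat.eq_zero_or_pos m with h0 | h
    · exact absurd (orderOf_eq_one_iff.mp (by rw [hm, h0, pow_zero])) hx1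
    · exact h
  set z : G := x ^ p ^ (m - 1) with hzdef
  have hzp : z ^ p = 1 := by
    rw [hzdef, ← pow_mul, ← pow_succ, Nat.sub_add_cancel hm1, ← hm, pow_orderOf_eq_one]
  have hzne : z ≠ 1 := by
    intro h
    have hdvd : orderOf x ∣ p ^ (m - 1) := orderOf_dvd_of_pow_eq_one h
    rw [hm] at hdvd
    have := (Nat.pow_dvd_pow_iff_le_right hp.one_lt).mp hdvd
    omega
  have hzH : z ∉ H := by
    intro hz
    have : z ∈ Subgroup.zpowers x ⊓ H :=
      ⟨Subgroup.pow_mem _ (Subgroup.mem_zpowers x) _, hz⟩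
    rw [hbot] at this
    exact hzne this
  have hle : H ≤ omega1 p := by
    intro h hh
    have hyH : z * h ∉ H := by
      intro hy
      exact hzH (by simpa using H.mul_mem hy (H.inv_mem hh))
    have hybot : Subgroup.zpowers (z * h) ⊓ H = ⊥ := (hiso _).resolve_left hyH
    have hyp : (z * h) ^ p = h ^ p := by rw [mul_pow, hzp, one_mul]
    have : h ^ p ∈ Subgroup.zpowers (z * h) ⊓ H :=
      ⟨hyp ▸ Subgroup.pow_mem _ (Subgroup.mem_zpowers (z * h)) p, H.pow_mem hh p⟩
    rw [hybot] at this
    exact this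
  exact lt_of_le_of_ne hle fun h => hzH (h ▸ (hzp : z ∈ omega1 p))
end

section
/- Every isolated proper subgroup of a finite abelian p-group is elementary abelian, i.e., every element of such a subgroup satisfies x^p = 1. -/
theorem stmt7 {p : ℕ} (hp : p.Prime) {G : Type*} [CommGroup G] [Finite G]
    (hG : IsPGroup p G) (H : Subgroup G) (hiso : H.IsIsolated) (hne : H ≠ ⊤) :
    ∀ x ∈ H, x ^ p = 1 := by
  -- pick g ∉ H of minimal order
  obtain ⟨g0, hg0⟩ : ∃ g : G, g ∉ H := by
    by_contra h
    push_neg at h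
    exact hne ((Subgroup.eq_top_iff' H).mpr h)
  set S : Set ℕ := {n | ∃ g : G, g ∉ H ∧ orderOf g = n} with hSdef
  have hS : S.Nonempty := ⟨orderOf g0, g0, hg0, rfl⟩
  obtain ⟨g, hgH, hgn⟩ := Nat.sInf_mem hS
  have hmin : ∀ h : G, h ∉ H → sInf S ≤ orderOf h := fun h hh =>
    Nat.sInf_le ⟨h, hh, rfl⟩
  -- orderOf g = p ^ k with k ≥ 1
  obtain ⟨k, hk⟩ := hG g
  obtain ⟨m, hm, hgo⟩ := (Nat.dvd_prime_pow hp).mp (orderOf_dvd_of_pow_eq_one hk)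
  have hg1 : g ≠ 1 := fun h => hgH (h ▸ H.one_mem)
  have hm0 : m ≠ 0 := by
    rintro rfl
    exact hg1 (orderOf_eq_one_iff.mp (by simpa using hgo))
  -- g ^ p ∈ H
  have hgpH : g ^ p ∈ H := by
    by_contra hgp
    have h1 : (g ^ p) ^ p ^ (m - 1) = 1 := by
      rw [← pow_mul, ← pow_succ']
      rw [Nat.sub_add_cancel (Nat.one_le_iff_ne_zero.mpr hm0)]
      exact hgo ▸ pow_orderOf_eq_one g
    have h2 : orderOf (g ^ p) ≤ p ^ (m - 1) :=
      Nat.le_of_dvd (pow_pos hp.pos _) (orderOf_dvd_of_pow_eq_one h1)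
    have h3 : sInf S ≤ orderOf (g ^ p) := hmin _ hgp
    have h4 : p ^ (m - 1) < p ^ m :=
      Nat.pow_lt_pow_right hp.one_lt (Nat.pred_lt hm0)
    omega
  -- isolation forces g ^ p = 1
  have hgp1 : g ^ p = 1 := by
    rcases hiso g with h | h
    · exact absurd h hgH
    · have : g ^ p ∈ Subgroup.zpowers g ⊓ H :=
        ⟨Subgroup.pow_mem _ (Subgroup.mem_zpowers g) p, hgpH⟩
      simpa [h] using this
  -- main argument
  intro x hx
  have hgxH : g * x ∉ H := fun h => hgH (by simpa using H.mul_mem h (H.inv_mem hx))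
  rcases hiso (g * x) with h | h
  · exact absurd h hgxH
  · have hxp : x ^ p = (g * x) ^ p := by rw [mul_pow, hgp1, one_mul]
    have : x ^ p ∈ Subgroup.zpowers (g * x) ⊓ H :=
      ⟨hxp ▸ Subgroup.pow_mem _ (Subgroup.mem_zpowers (g * x)) p, H.pow_mem hx p⟩
    simpa [h] using this
end

section
/- Let G = B × A where B is elementary abelian p-group (Z_p)^r and A = Z_{p^{α_{r+1}}} × ⋯ × Z_{p^{α_k}} with all α_i ≥ 2. Then a proper subgroup H of G is isolated in G if and only if H ∩ A = 1 (identifying A with the subgroup 1 × A of G). -/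
open Subgroup

namespace Subgroup.IsIsolated

variable {G : Type*} [Group G] {H : Subgroup G}

theorem eq_one_of_mem_zpowers (hH : H.IsIsolated) {x g : G} (hx : x ∉ H)
    (hgx : g ∈ zpowers x) (hgH : g ∈ H) : g = 1 := by
  have hg : g ∈ zpowers x ⊓ H := ⟨hgx, hgH⟩
  rwa [(hH x).resolve_left hx, mem_bot] at hg

theorem mem_of_pow_mem (hH : H.IsIsolated) {y : G} {n : ℕ} (hyn : y ^ n ∈ H)
    (hyn1 : y ^ n ≠ 1) : y ∈ H :=
  by_contra fun hy => hyn1 (hH.eq_one_of_mem_zpowers hy (npow_mem_zpowers y n) hyn)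

end Subgroup.IsIsolated

section PGroup

variable {p : ℕ} [hp : Fact p.Prime] {G : Type*}

theorem IsPGroup.orderOf_pow_orderOf_div_prime [Group G] (hG : IsPGroup p G) {g : G}
    (hg : g ≠ 1) : orderOf (g ^ (orderOf g / p)) = p :=
  orderOf_pow_orderOf_div (hG.isOfFinOrder hp.out.ne_zero g).orderOf_pos.ne' (hG.dvd_orderOf hg)

theorem Subgroup.IsIsolated.eq_top_of_pow_mem [CommGroup G] (hG : IsPGroup p G)
    {H : Subgroup G} (hH : H.IsIsolated) {w : G} (hwH : w ^ p ∈ H) (hw1 : w ^ p ≠ 1) :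
    H = ⊤ := by
  have hw : w ∈ H := hH.mem_of_pow_mem hwH hw1
  refine (eq_top_iff' H).mpr fun x => by_contra fun hx => ?_
  have hx1 : x ≠ 1 := fun h => hx (h ▸ H.one_mem)
  set c := x ^ (orderOf x / p)
  have hc : orderOf c = p := hG.orderOf_pow_orderOf_div_prime hx1
  have hcp : c ^ p = 1 := hc ▸ pow_orderOf_eq_one c
  have hcH : c ∉ H := fun h => hp.out.ne_one <| by
    rw [← hc, orderOf_eq_one_iff]
    exact hH.eq_one_of_mem_zpowers hx (npow_mem_zpowers x _) h
  have hcwp : (c * w) ^ p = w ^ p := by rw [mul_pow, hcp, one_mul]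
  have hcw : c * w ∈ H := hH.mem_of_pow_mem (hcwp ▸ hwH) (hcwp ▸ hw1)
  exact hcH (by simpa using H.mul_mem hcw (H.inv_mem hw))

theorem Subgroup.IsIsolated.inf_eq_bot [CommGroup G] (hG : IsPGroup p G) {A H : Subgroup G}
    (hA : ∀ z ∈ A, z ^ p = 1 → ∃ w, w ^ p = z) (hH : H.IsIsolated) (hne : H ≠ ⊤) :
    H ⊓ A = ⊥ := by
  refine (bot_or_exists_ne_one (H ⊓ A)).resolve_right fun ⟨g, hg, hg1⟩ => hne ?_
  set z := g ^ (orderOf g / p)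
  have hz : orderOf z = p := hG.orderOf_pow_orderOf_div_prime hg1
  have hzHA : z ∈ H ⊓ A := pow_mem hg _
  have hz1 : z ≠ 1 := fun h => hp.out.ne_one (by rw [← hz, h, orderOf_one])
  obtain ⟨w, hwz⟩ := hA z hzHA.2 (hz ▸ pow_orderOf_eq_one z)
  exact hH.eq_top_of_pow_mem hG (hwz ▸ hzHA.1) (hwz ▸ hz1)

theorem Subgroup.isIsolated_of_inf_eq_bot [Group G] (hG : IsPGroup p G) {A H : Subgroup G}
    (hA : ∀ x : G, x ^ p ∈ A) (hHA : H ⊓ A = ⊥) : H.IsIsolated := by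
  refine fun x => or_iff_not_imp_left.mpr fun hx => eq_bot_iff.mpr fun g ⟨hgx, hgH⟩ => ?_
  obtain ⟨m, rfl : x ^ m = g⟩ :=
    (hG.isOfFinOrder hp.out.ne_zero x).mem_powers_iff_mem_zpowers.mpr hgx
  by_cases hpm : p ∣ m
  · obtain ⟨e, rfl⟩ := hpm
    rw [← hHA, pow_mul]
    exact ⟨pow_mul x p e ▸ hgH, A.pow_mem (hA x) e⟩
  · obtain ⟨n, hn⟩ := exists_pow_eq_self_of_coprime
      (hG.orderOf_coprime (hp.out.coprime_iff_not_dvd.mpr hpm) x).symm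
    exact absurd (hn ▸ H.pow_mem hgH n) hx

theorem Subgroup.isIsolated_iff_inf_eq_bot [CommGroup G] (hG : IsPGroup p G) {A H : Subgroup G}
    (hpow : ∀ x : G, x ^ p ∈ A) (hroot : ∀ z ∈ A, z ^ p = 1 → ∃ w, w ^ p = z) (hne : H ≠ ⊤) :
    H.IsIsolated ↔ H ⊓ A = ⊥ :=
  ⟨fun hH => hH.inf_eq_bot hG hroot hne, isIsolated_of_inf_eq_bot hG hpow⟩

end PGroup

theorem ZMod.exists_natCast_mul_eq_of_natCast_mul_eq_zero {p n : ℕ} (hp : p ≠ 0) (hn : 2 ≤ n)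
    {a : ZMod (p ^ n)} (ha : (p : ZMod (p ^ n)) * a = 0) : ∃ b : ZMod (p ^ n), p * b = a := by
  have : NeZero (p ^ n) := ⟨pow_ne_zero n hp⟩
  rw [← ZMod.natCast_zmod_val a, ← Nat.cast_mul, ZMod.natCast_eq_zero_iff] at ha
  have hpp : p * p ∣ p * a.val := (sq p ▸ pow_dvd_pow p hn).trans ha
  obtain ⟨c, hc⟩ := Nat.dvd_of_mul_dvd_mul_left (Nat.pos_of_ne_zero hp) hpp
  exact ⟨c, by rw [← ZMod.natCast_zmod_val a, hc, Nat.cast_mul]⟩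

theorem ZMod.exists_pi_pow_eq_of_pow_eq_one {p : ℕ} (hp : p ≠ 0) {ι : Type*} {n : ι → ℕ}
    (hn : ∀ i, 2 ≤ n i) {z : ∀ i, Multiplicative (ZMod (p ^ n i))} (hz : z ^ p = 1) :
    ∃ w, w ^ p = z := by
  have hroot i : ∃ b : ZMod (p ^ n i), p * b = (z i).toAdd :=
    exists_natCast_mul_eq_of_natCast_mul_eq_zero hp (hn i) <| by
      rw [← nsmul_eq_mul, ← toAdd_pow, ← Pi.pow_apply, hz]; rfl
  choose b hb using hroot
  exact ⟨fun i => .ofAdd (b i), funext fun i => by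
    rw [Pi.pow_apply, ← ofAdd_nsmul, nsmul_eq_mul, hb]; rfl⟩

theorem stmt9 {p : ℕ} [Fact p.Prime] {r s : ℕ} (α : Fin s → ℕ) (hα : ∀ i, 2 ≤ α i)
    (H : Subgroup ((Fin r → Multiplicative (ZMod p)) ×
      (∀ i, Multiplicative (ZMod (p ^ α i)))))
    (hne : H ≠ ⊤) :
    H.IsIsolated ↔ H ⊓ Subgroup.prod ⊥ ⊤ = ⊥ := by
  refine isIsolated_iff_inf_eq_bot (p := p) ?_ (fun x => ?_) (fun z hz hzp => ?_) hne
  · exact IsPGroup.of_card (n := r + ∑ i, α i) (by simp [Finset.prod_pow_eq_pow_sum, pow_add])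
  · exact mem_prod.mpr ⟨funext fun j => by simpa using pow_card_eq_one' (x := x.1 j), trivial⟩
  · obtain ⟨b, hb⟩ :=
      ZMod.exists_pi_pow_eq_of_pow_eq_one (Fact.out : p.Prime).ne_zero hα (congrArg Prod.snd hzp)
    exact ⟨(1, b), Prod.ext (by simpa [eq_comm] using (mem_prod.mp hz).1) hb⟩
end

section
/- Let G be a finite abelian p-group and H ≤ G a subgroup of order p. Then H is isolated in G if and only if H is not contained in any cyclic subgroup of G of order p². -/
theorem stmt11 {p : ℕ} (hp : p.Prime) {G : Type*} [CommGroup G] [Finite G]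
    (hG : IsPGroup p G) (H : Subgroup G) (hcard : Nat.card H = p) :
    H.IsIsolated ↔ ¬ ∃ x : G, orderOf x = p ^ 2 ∧ H ≤ Subgroup.zpowers x := by
  have hp1 : 1 < p := hp.one_lt
  have hHbot : H ≠ ⊥ := by
    intro h
    rw [h, Subgroup.card_bot] at hcard
    omega
  -- elements of H have h ^ p = 1
  have hpow : ∀ h ∈ H, h ^ p = 1 := by
    intro h hh
    have : orderOf (⟨h, hh⟩ : H) ∣ Nat.card H := orderOf_dvd_natCard _
    rw [hcard, ← Subgroup.orderOf_coe (⟨h, hh⟩ : H)] at this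
    exact orderOf_dvd_iff_pow_eq_one.mp this
  constructor
  · rintro hiso ⟨x, hx, hle⟩
    rcases hiso x with hxH | hinf
    · have : orderOf x ∣ Nat.card H := by
        rw [← Subgroup.orderOf_mk x hxH]; exact orderOf_dvd_natCard _
      rw [hx, hcard] at this
      have := Nat.le_of_dvd hp.pos this
      nlinarith
    · rw [inf_eq_right.mpr hle] at hinf
      exact hHbot hinf
  · intro hno x
    by_contra hcon
    push_neg at hcon
    obtain ⟨hxH, hinf⟩ := hcon
    -- H ≤ zpowers x
    have hle : H ≤ Subgroup.zpowers x := by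
      have h1 : Subgroup.zpowers x ⊓ H ≤ H := inf_le_right
      have h2 : Subgroup.zpowers x ⊓ H = H := by
        have hdvd : Nat.card (Subgroup.zpowers x ⊓ H : Subgroup G) ∣ Nat.card H := by
          exact Subgroup.card_dvd_of_le h1
        rw [hcard] at hdvd
        rcases (Nat.Prime.eq_one_or_self_of_dvd hp _ hdvd) with h | h
        · exfalso
          apply hinf
          exact Subgroup.eq_bot_of_card_eq _ h
        · exact Subgroup.eq_of_le_of_card_ge h1 (by rw [hcard, h])
      rw [← h2]; exact inf_le_left
    -- orderOf x = p ^ k with k ≥ 2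
    obtain ⟨k0, hk0⟩ := hG x
    obtain ⟨k, -, hk⟩ := (Nat.dvd_prime_pow hp).mp (orderOf_dvd_of_pow_eq_one hk0)
    have hk2 : 2 ≤ k := by
      by_contra hk2
      push_neg at hk2
      interval_cases k
      · simp at hk
        exact hxH (hk ▸ H.one_mem)
      · -- orderOf x = p, so zpowers x = H
        have hcz : Nat.card (Subgroup.zpowers x) = p := by
          rw [Nat.card_zpowers, hk, pow_one]
        have : H = Subgroup.zpowers x :=
          Subgroup.eq_of_le_of_card_ge hle (by rw [hcard, hcz])
        exact hxH (this ▸ Subgroup.mem_zpowers x)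
    apply hno
    refine ⟨x ^ p ^ (k - 2), ?_, ?_⟩
    · rw [orderOf_pow, hk]
      have hg : Nat.gcd (p ^ k) (p ^ (k - 2)) = p ^ (k - 2) :=
        Nat.gcd_eq_right (pow_dvd_pow p (by omega))
      rw [hg, Nat.pow_div (by omega) hp.pos]
      congr 1
      omega
    · intro h hh
      obtain ⟨m, hm⟩ := mem_powers_iff_mem_zpowers.mpr (hle hh)
      simp only at hm
      have h1 : x ^ (m * p) = 1 := by
        rw [pow_mul, hm]
        exact hpow h hh
      have hdvd : p ^ k ∣ m * p := hk ▸ orderOf_dvd_of_pow_eq_one h1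
      have hdvd2 : p ^ (k - 1) ∣ m := by
        have : p ^ (k - 1) * p ∣ m * p := by
          rwa [← pow_succ, show k - 1 + 1 = k by omega]
        exact (Nat.mul_dvd_mul_iff_right hp.pos).mp this
      have hdvd3 : p ^ (k - 2) ∣ m := dvd_trans (pow_dvd_pow p (by omega)) hdvd2
      obtain ⟨c, hc⟩ := hdvd3
      rw [← hm, hc, pow_mul]
      exact Subgroup.pow_mem _ (Subgroup.mem_zpowers _) c
end

section
/- Let G = (Z_p)^r × A with A a product of k−r cyclic p-groups each of order ≥ p², for a prime p. Then G has exactly p^{k-r} · (p^r − 1)/(p − 1) isolated subgroups of order p. -/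
section Aux

open Subgroup

lemma fiber_card {A B : Type*} [Finite A] [Finite B] (f : A → B) (n : ℕ)
    (h : ∀ b : B, Nat.card {a // f a = b} = n) :
    Nat.card A = Nat.card B * n := by
  classical
  cases nonempty_fintype A
  cases nonempty_fintype B
  rw [Nat.card_eq_fintype_card, Nat.card_eq_fintype_card,
    ← Fintype.card_congr (Equiv.sigmaFiberEquiv f), Fintype.card_sigma]
  have : ∀ b : B, Fintype.card {a // f a = b} = n := fun b => by
    rw [← Nat.card_eq_fintype_card]; exact h b
  simp [this, Finset.sum_const, Finset.card_univ, mul_comm]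

variable {p : ℕ} [hp : Fact p.Prime]

lemma pow_mul_pow_pred {n : ℕ} (hn : 1 ≤ n) : p * p ^ (n - 1) = p ^ n := by
  rw [← pow_succ']
  congr 1
  omega

lemma torsion_mem_iff {n : ℕ} (hn : 2 ≤ n) (c : ZMod (p ^ n)) :
    (p : ZMod (p ^ n)) * c = 0 ↔ c ∈ AddSubgroup.zmultiples ((p ^ (n - 1) : ℕ) : ZMod (p ^ n)) := by
  haveI : NeZero (p ^ n) := ⟨pow_ne_zero _ hp.out.ne_zero⟩
  have hcast : ((p : ZMod (p ^ n))) * ((p ^ (n - 1) : ℕ) : ZMod (p ^ n)) = 0 := by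
    rw [← Nat.cast_mul, pow_mul_pow_pred (p := p) (by omega), ZMod.natCast_self]
  constructor
  · intro h
    have h1 : ((p * c.val : ℕ) : ZMod (p ^ n)) = 0 := by
      push_cast [ZMod.natCast_rightInverse c]
      exact h
    rw [ZMod.natCast_eq_zero_iff] at h1
    have h3 : p * p ^ (n - 1) ∣ p * c.val := by
      rw [pow_mul_pow_pred (by omega)]; exact h1
    have h2 : p ^ (n - 1) ∣ c.val := (Nat.mul_dvd_mul_iff_left hp.out.pos).mp h3
    obtain ⟨s, hs⟩ := h2
    refine ⟨(s : ℤ), ?_⟩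
    have hc : c = ((p ^ (n - 1) * s : ℕ) : ZMod (p ^ n)) := by
      rw [← hs, ZMod.natCast_rightInverse c]
    show (s : ℤ) • ((p ^ (n - 1) : ℕ) : ZMod (p ^ n)) = c
    rw [hc, zsmul_eq_mul]
    push_cast
    ring
  · rintro ⟨z, rfl⟩
    rw [mul_smul_comm, hcast, smul_zero]

lemma mult_pow_p_iff {n : ℕ} (hn : 2 ≤ n) (c : Multiplicative (ZMod (p ^ n))) :
    c ^ p = 1 ↔ c.toAdd ∈ AddSubgroup.zmultiples ((p ^ (n - 1) : ℕ) : ZMod (p ^ n)) := by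
  rw [← torsion_mem_iff hn, ← nsmul_eq_mul]
  constructor
  · intro h
    have := congrArg Multiplicative.toAdd h
    rwa [toAdd_pow, toAdd_one] at this
  · intro h
    have : (c ^ p).toAdd = (1 : Multiplicative (ZMod (p ^ n))).toAdd := by
      rw [toAdd_pow, toAdd_one]; exact h
    exact Multiplicative.toAdd.injective this

lemma card_torsion {n : ℕ} (hn : 2 ≤ n) :
    Nat.card {c : Multiplicative (ZMod (p ^ n)) // c ^ p = 1} = p := by
  haveI : NeZero (p ^ n) := ⟨pow_ne_zero _ hp.out.ne_zero⟩
  have e1 : {c : Multiplicative (ZMod (p ^ n)) // c ^ p = 1} ≃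
      AddSubgroup.zmultiples ((p ^ (n - 1) : ℕ) : ZMod (p ^ n)) :=
    (Multiplicative.toAdd.subtypeEquiv fun c => by
      exact mult_pow_p_iff hn c)
  rw [Nat.card_congr e1, Nat.card_zmultiples, ZMod.addOrderOf_coe _ (pow_ne_zero _ hp.out.ne_zero),
    Nat.gcd_eq_right (pow_dvd_pow p (by omega)), Nat.pow_div (by omega) hp.out.pos,
    show n - (n - 1) = 1 by omega, pow_one]

lemma exists_pow_p {n : ℕ} (hn : 2 ≤ n) (c : Multiplicative (ZMod (p ^ n))) (h : c ^ p = 1) :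
    ∃ d, d ^ p = c := by
  rw [mult_pow_p_iff hn c] at h
  obtain ⟨z, hz⟩ := h
  refine ⟨Multiplicative.ofAdd (z • ((p ^ (n - 2) : ℕ) : ZMod (p ^ n))), ?_⟩
  apply Multiplicative.toAdd.injective
  rw [toAdd_pow, toAdd_ofAdd, smul_comm, ← hz]
  congr 1
  rw [nsmul_eq_mul, ← Nat.cast_mul]
  congr 1
  rw [show n - 1 = (n-2) + 1 by omega, pow_succ']

lemma orderOf_of_mem_card_p {G : Type*} [Group G] {H : Subgroup G} (hH : Nat.card H = p)
    {h : G} (hh : h ∈ H) (h1 : h ≠ 1) : orderOf h = p := by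
  have hfin : Finite H := Nat.finite_of_card_ne_zero (by rw [hH]; exact hp.out.pos.ne')
  have hdvd : orderOf h ∣ p := by
    rw [← Subgroup.orderOf_mk h hh, ← hH]
    exact orderOf_dvd_natCard _
  rcases (Nat.dvd_prime hp.out).mp hdvd with h0 | h0
  · exact absurd (orderOf_eq_one_iff.mp h0) h1
  · exact h0

lemma isolated_iff_no_pth_power {G : Type*} [Group G] [Finite G] (hG : IsPGroup p G)
    {H : Subgroup G} (hH : Nat.card H = p) :
    H.IsIsolated ↔ ∀ h ∈ H, h ≠ 1 → ¬ ∃ y : G, y ^ p = h := by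
  constructor
  · intro hiso h hh h1 ⟨y, hy⟩
    rcases hiso y with hyH | hbot
    · have : orderOf y ∣ p := by
        have := orderOf_of_mem_card_p hH hyH
        by_cases hy1 : y = 1
        · simp [hy1]
        · exact (this hy1).dvd
      exact h1 (by rw [← hy]; exact orderOf_dvd_iff_pow_eq_one.mp this)
    · have hmem : h ∈ Subgroup.zpowers y ⊓ H :=
        ⟨by rw [← hy]; exact Subgroup.pow_mem _ (Subgroup.mem_zpowers y) p, hh⟩
      rw [hbot] at hmem
      exact h1 (Subgroup.mem_bot.mp hmem)
  · intro hcond x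
    by_cases hbot : Subgroup.zpowers x ⊓ H = ⊥
    · right; exact hbot
    left
    obtain ⟨h, hmem, h1⟩ := (Subgroup.zpowers x ⊓ H).bot_or_exists_ne_one.resolve_left hbot
    have hhp : orderOf h = p := orderOf_of_mem_card_p hH hmem.2 h1
    obtain ⟨n, hn⟩ := Submonoid.mem_powers_iff h x |>.mp
      ((isOfFinOrder_of_finite x).mem_powers_iff_mem_zpowers.mpr hmem.1)
    obtain ⟨kk, hk⟩ := hG x
    obtain ⟨m, -, hm⟩ := (Nat.dvd_prime_pow hp.out).mp (orderOf_dvd_of_pow_eq_one hk)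
    rcases Nat.lt_or_ge m 2 with h2 | h2
    · interval_cases m
      · rw [pow_zero, orderOf_eq_one_iff] at hm
        exact absurd (by rw [← hn, hm, one_pow]) h1
      · rw [pow_one] at hm
        have hzle : Subgroup.zpowers h ≤ Subgroup.zpowers x := Subgroup.zpowers_le.mpr hmem.1
        have heq := Subgroup.eq_of_le_of_card_ge hzle
          (by rw [Nat.card_zpowers, Nat.card_zpowers, hm, hhp])
        have : x ∈ Subgroup.zpowers h := heq ▸ Subgroup.mem_zpowers x
        exact Subgroup.zpowers_le.mpr hmem.2 this
    · exfalso
      have hord : x ^ (n * p) = 1 := by rw [pow_mul, hn, ← hhp, pow_orderOf_eq_one]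
      have hd : p ^ m ∣ n * p := hm ▸ orderOf_dvd_of_pow_eq_one hord
      have hdvd : p ^ (m - 1) ∣ n := by
        have h3 : p ^ (m - 1) * p ∣ n * p := by
          rw [← pow_succ, show m - 1 + 1 = m by omega]; exact hd
        exact (Nat.mul_dvd_mul_iff_right hp.out.pos).mp h3
      obtain ⟨s, hs⟩ := hdvd
      refine hcond h hmem.2 h1 ⟨x ^ (p ^ (m - 2) * s), ?_⟩
      rw [← pow_mul, ← hn, hs]
      congr 1
      rw [show m - 1 = (m - 2) + 1 by omega, pow_succ]
      ring

section Specific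

variable {r m : ℕ} (α : Fin m → ℕ)

abbrev GG := (Fin r → Multiplicative (ZMod p)) × (∀ i, Multiplicative (ZMod (p ^ α i)))

lemma fst_pow (a : Fin r → Multiplicative (ZMod p)) : a ^ p = 1 := by
  funext i
  show (a i) ^ p = 1
  apply Multiplicative.toAdd.injective
  rw [toAdd_pow, toAdd_one, nsmul_eq_mul, ZMod.natCast_self, zero_mul]

lemma pth_power_iff (hα : ∀ i, 2 ≤ α i) (x : GG (p := p) (r := r) α) (hx : x ^ p = 1) :
    (∃ y : GG (p := p) (r := r) α, y ^ p = x) ↔ x.1 = 1 := by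
  constructor
  · rintro ⟨y, rfl⟩
    show y.1 ^ p = 1
    exact fst_pow y.1
  · intro h1
    have h2 : ∀ i, (x.2 i) ^ p = 1 := by
      intro i
      have : x.2 ^ p = 1 := congrArg Prod.snd hx
      exact congrFun this i
    choose d hd using fun i => exists_pow_p (hα i) (x.2 i) (h2 i)
    refine ⟨(1, d), Prod.ext ?_ ?_⟩
    · show (1 : Fin r → Multiplicative (ZMod p)) ^ p = x.1
      rw [one_pow, h1]
    · show d ^ p = x.2
      funext i
      exact hd i

lemma ispgroup_GG : IsPGroup p (GG (p := p) (r := r) α) := by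
  haveI : ∀ i, NeZero (p ^ α i) := fun i => ⟨pow_ne_zero _ hp.out.ne_zero⟩
  apply IsPGroup.of_card (n := r + ∑ i, α i)
  rw [Nat.card_prod, Nat.card_pi, Nat.card_pi]
  simp only [Nat.card_congr Multiplicative.toAdd, Nat.card_zmod]
  rw [Finset.prod_const, Finset.card_univ, Fintype.card_fin,
    Finset.prod_pow_eq_pow_sum, pow_add]

end Specific

lemma nat_card_subtype_ne {A : Type*} [Finite A] (a : A) :
    Nat.card {x : A // x ≠ a} = Nat.card A - 1 := by
  classical
  cases nonempty_fintype A
  rw [Nat.card_eq_fintype_card, Nat.card_eq_fintype_card]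
  have h := Fintype.card_subtype_compl (fun x : A => x = a)
  rw [Fintype.card_subtype_eq] at h
  exact h

section Specific2

variable {r m : ℕ} (α : Fin m → ℕ)

instance (i : Fin m) : NeZero (p ^ α i) := ⟨pow_ne_zero _ hp.out.ne_zero⟩

lemma zpowers_isolated (hα : ∀ i, 2 ≤ α i) {x : GG (p := p) (r := r) α}
    (hx : orderOf x = p) (hx1 : x.1 ≠ 1) : (Subgroup.zpowers x).IsIsolated := by
  rw [isolated_iff_no_pth_power (ispgroup_GG α) (by rw [Nat.card_zpowers, hx])]
  rintro h hh h1 ⟨y, hy⟩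
  obtain ⟨n, hn⟩ := Submonoid.mem_powers_iff h x |>.mp
    ((isOfFinOrder_of_finite x).mem_powers_iff_mem_zpowers.mpr hh)
  have hxp : x ^ p = 1 := orderOf_dvd_iff_pow_eq_one.mp (dvd_of_eq hx)
  have hhp : h ^ p = 1 := by rw [← hn, ← pow_mul, mul_comm, pow_mul, hxp, one_pow]
  have hfst : h.1 = 1 := (pth_power_iff α hα h hhp).mp ⟨y, hy⟩
  have hndvd : ¬ p ∣ n := by
    intro hdvd
    apply h1
    rw [← hn]
    exact orderOf_dvd_iff_pow_eq_one.mp ((dvd_of_eq hx).trans hdvd)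
  have ho1 : orderOf x.1 = p := orderOf_eq_prime (fst_pow x.1) hx1
  apply hndvd
  rw [← ho1]
  apply orderOf_dvd_iff_pow_eq_one.mpr
  calc x.1 ^ n = (x ^ n).1 := rfl
    _ = 1 := by rw [hn, hfst]

lemma mem_isolated (hα : ∀ i, 2 ≤ α i) {H : Subgroup (GG (p := p) (r := r) α)}
    (hiso : H.IsIsolated) (hcard : Nat.card H = p)
    {x : GG (p := p) (r := r) α} (hx : x ∈ H) (hx1 : x ≠ 1) :
    orderOf x = p ∧ x.1 ≠ 1 ∧ Subgroup.zpowers x = H := by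
  have hord : orderOf x = p := orderOf_of_mem_card_p hcard hx hx1
  have hfst : x.1 ≠ 1 := by
    intro h1
    have hxp : x ^ p = 1 := orderOf_dvd_iff_pow_eq_one.mp (dvd_of_eq hord)
    exact (isolated_iff_no_pth_power (ispgroup_GG α) hcard).mp hiso x hx hx1
      ((pth_power_iff α hα x hxp).mpr h1)
  exact ⟨hord, hfst, Subgroup.eq_of_le_of_card_ge (Subgroup.zpowers_le.mpr hx)
    (by rw [Nat.card_zpowers, hord, hcard])⟩

lemma card_T (hα : ∀ i, 2 ≤ α i) :
    Nat.card {x : GG (p := p) (r := r) α // orderOf x = p ∧ x.1 ≠ 1} = (p ^ r - 1) * p ^ m := by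
  have hiff : ∀ x : GG (p := p) (r := r) α,
      (orderOf x = p ∧ x.1 ≠ 1) ↔ (x.1 ≠ 1 ∧ x.2 ^ p = 1) := by
    intro x
    constructor
    · rintro ⟨ho, h1⟩
      exact ⟨h1, congrArg Prod.snd (orderOf_dvd_iff_pow_eq_one.mp (dvd_of_eq ho))⟩
    · rintro ⟨h1, h2⟩
      refine ⟨orderOf_eq_prime (Prod.ext (fst_pow x.1) h2)
        (fun h => h1 (congrArg Prod.fst h)), h1⟩
  rw [Nat.card_congr ((Equiv.subtypeEquivRight hiff).trans (Equiv.subtypeProdEquivProd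
      (p := fun a : Fin r → Multiplicative (ZMod p) => a ≠ 1)
      (q := fun b : ∀ i, Multiplicative (ZMod (p ^ α i)) => b ^ p = 1))),
    Nat.card_prod]
  congr 1
  · rw [nat_card_subtype_ne, Nat.card_pi]
    simp only [Nat.card_congr Multiplicative.toAdd, Nat.card_zmod]
    rw [Finset.prod_const, Finset.card_univ, Fintype.card_fin]
  · have hb : ∀ b : (∀ i, Multiplicative (ZMod (p ^ α i))),
        (b ^ p = 1) ↔ ∀ i, (b i) ^ p = 1 := fun b => funext_iff
    rw [Nat.card_congr ((Equiv.subtypeEquivRight hb).trans (Equiv.subtypePiEquivPi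
        (p := fun i (c : Multiplicative (ZMod (p ^ α i))) => c ^ p = 1))),
      Nat.card_pi]
    calc (∏ i, Nat.card {c : Multiplicative (ZMod (p ^ α i)) // c ^ p = 1})
        = ∏ _i : Fin m, p := Finset.prod_congr rfl (fun i _ => card_torsion (hα i))
      _ = p ^ m := by rw [Finset.prod_const, Finset.card_univ, Fintype.card_fin]

end Specific2

section Main

variable {r m : ℕ} (α : Fin m → ℕ)

lemma main_count (hα : ∀ i, 2 ≤ α i) :
    Nat.card {H : Subgroup (GG (p := p) (r := r) α) |
      H.IsIsolated ∧ Nat.card H = p} * (p - 1) = p ^ m * (p ^ r - 1) := by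
  set T := {x : GG (p := p) (r := r) α // orderOf x = p ∧ x.1 ≠ 1} with hT
  set S := {H : Subgroup (GG (p := p) (r := r) α) | H.IsIsolated ∧ Nat.card H = p} with hS
  let f : T → S := fun x =>
    ⟨Subgroup.zpowers x.1, zpowers_isolated α hα x.2.1 x.2.2,
      by rw [Nat.card_zpowers, x.2.1]⟩
  have hfib : ∀ H : S, Nat.card {x : T // f x = H} = p - 1 := by
    rintro ⟨H, hiso, hcard⟩
    have e : {x : T // f x = ⟨H, hiso, hcard⟩} ≃ {h : H // h ≠ 1} :=
      { toFun := fun x =>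
          ⟨⟨x.1.1, by
            have hz : Subgroup.zpowers x.1.1 = H := congrArg Subtype.val x.2
            exact (SetLike.ext_iff.mp hz x.1.1).mp (Subgroup.mem_zpowers x.1.1)⟩,
            fun hval => x.1.2.2 (by
              have : x.1.1 = 1 := congrArg Subtype.val hval
              rw [this]; rfl)⟩
        invFun := fun h =>
          ⟨⟨h.1.1, (mem_isolated α hα hiso hcard h.1.2
                (fun he => h.2 (Subtype.ext he))).1,
              (mem_isolated α hα hiso hcard h.1.2
                (fun he => h.2 (Subtype.ext he))).2.1⟩,
            Subtype.ext (mem_isolated α hα hiso hcard h.1.2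
                (fun he => h.2 (Subtype.ext he))).2.2⟩
        left_inv := fun x => Subtype.ext (Subtype.ext rfl)
        right_inv := fun h => Subtype.ext (Subtype.ext rfl) }
    rw [Nat.card_congr e, nat_card_subtype_ne, hcard]
  have hcount := fiber_card f (p - 1) hfib
  rw [card_T α hα] at hcount
  rw [← hcount]
  ring

end Main

end Aux

theorem stmt12 {p : ℕ} [Fact p.Prime] {k r : ℕ} (hrk : r ≤ k)
    (α : Fin (k - r) → ℕ) (hα : ∀ i, 2 ≤ α i) :
    Nat.card {H : Subgroup ((Fin r → Multiplicative (ZMod p)) ×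
        (∀ i, Multiplicative (ZMod (p ^ α i)))) |
      H.IsIsolated ∧ Nat.card H = p} * (p - 1) = p ^ (k - r) * (p ^ r - 1) := by
  exact main_count α hα
end

section
/- For a prime p and m ≥ 2, the group Z_p × Z_{p^m} has exactly p + 2 isolated subgroups: the trivial subgroup, the whole group, and p subgroups of order p. -/
/-!
Write `G = ℤ_p × ℤ_{p^m}` additively and let `s = (0, p^(m-1))`, which generates the unique
subgroup of order `p` of the cyclic factor. Every nonzero element of `0 × ℤ_{p^m}` has `s` among
its multiples, hence so does every `x` with `p x ≠ 0`, since `p x` lies in that factor.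

So an isolated subgroup containing `s` contains every element outside the proper subgroup `G[p]`,
and is therefore `G`. A subgroup avoiding `s` meets `0 × ℤ_{p^m}` trivially; it is then either
trivial or generated by a unique element `(1, c p^(m-1))`, `c ∈ ℤ_p`. Conversely each of these
`p` subgroups of order `p` is isolated: if `n x = (1, c p^(m-1))` then `p ∤ n`, so in the
`p`-group `G` the element `x` has order `p` as well.
-/

open Subgroup Multiplicative

namespace ZMod
variable {p m : ℕ} [hp : Fact p.Prime]

theorem natCast_mul_prime_pow_pred_eq_iff (hm : 1 ≤ m) (n k : ℕ) :
    (n : ZMod (p ^ m)) * (p : ZMod (p ^ m)) ^ (m - 1) = k * (p : ZMod (p ^ m)) ^ (m - 1) ↔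
      (n : ZMod p) = k := by
  have hpm : p ^ m = p * p ^ (m - 1) := by rw [← pow_succ']; congr; omega
  rw [← Nat.cast_pow, ← Nat.cast_mul, ← Nat.cast_mul, natCast_eq_natCast_iff, hpm,
    Nat.ModEq.mul_right_cancel_iff' (pow_ne_zero _ hp.out.ne_zero), natCast_eq_natCast_iff]

theorem exists_eq_natCast_mul_of_prime_mul_eq_zero (hm : 1 ≤ m) {b : ZMod (p ^ m)}
    (hb : (p : ZMod (p ^ m)) * b = 0) : ∃ t : ℕ, b = t * (p : ZMod (p ^ m)) ^ (m - 1) := by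
  have : NeZero (p ^ m) := ⟨pow_ne_zero _ hp.out.ne_zero⟩
  have hdvd : p * p ^ (m - 1) ∣ p * b.val := by
    rw [← pow_succ', Nat.sub_add_cancel hm, ← natCast_eq_zero_iff, Nat.cast_mul,
      natCast_zmod_val, hb]
  obtain ⟨t, ht⟩ := Nat.dvd_of_mul_dvd_mul_left hp.out.pos hdvd
  exact ⟨t, by rw [← natCast_zmod_val b, ht, Nat.cast_mul, Nat.cast_pow, mul_comm]⟩

theorem exists_natCast_mul_eq_prime_pow_pred (hm : 1 ≤ m) {b : ZMod (p ^ m)} (hb : b ≠ 0) :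
    ∃ n : ℕ, n * b = (p : ZMod (p ^ m)) ^ (m - 1) := by
  suffices h : ∀ k (b : ZMod (p ^ m)), b ≠ 0 → (p : ZMod (p ^ m)) ^ k * b = 0 →
      ∃ n : ℕ, n * b = (p : ZMod (p ^ m)) ^ (m - 1) from
    h m b hb (by rw [← Nat.cast_pow, natCast_self, zero_mul])
  intro k
  induction k with
  | zero => intro b hb h; simp_all
  | succ k ih =>
    intro b hb h
    by_cases hpb : (p : ZMod (p ^ m)) * b = 0
    · obtain ⟨t, rfl⟩ := exists_eq_natCast_mul_of_prime_mul_eq_zero hm hpb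
      have ht : (t : ZMod p) ≠ 0 := fun ht =>
        hb (by simpa [ht] using natCast_mul_prime_pow_pred_eq_iff (p := p) hm t 0)
      refine ⟨((t : ZMod p)⁻¹).val, ?_⟩
      have := (natCast_mul_prime_pow_pred_eq_iff (p := p) hm (((t : ZMod p)⁻¹).val * t) 1).2
        (by rw [Nat.cast_mul, natCast_zmod_val, inv_mul_cancel₀ ht, Nat.cast_one])
      simpa [mul_assoc] using this
    · obtain ⟨n, hn⟩ := ih _ hpb (by rw [← mul_assoc, ← pow_succ, h])
      exact ⟨n * p, by push_cast; rw [mul_assoc, hn]⟩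

end ZMod

namespace Subgroup
variable {G : Type*} [Group G]

theorem eq_top_of_compl_subset {H K : Subgroup G} (hK : K ≠ ⊤) (h : (K : Set G)ᶜ ⊆ H) :
    H = ⊤ := by
  obtain ⟨z, hz⟩ : ∃ z, z ∉ K := by
    by_contra! h'
    exact hK (eq_top_iff.2 fun x _ => h' x)
  refine eq_top_iff.2 fun y _ => ?_
  by_cases hy : y ∈ K
  · have hyz : y * z ∉ K := fun h' => hz (by simpa using K.mul_mem (K.inv_mem hy) h')
    simpa using H.mul_mem (h hyz) (H.inv_mem (h hz))
  · exact h hy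

namespace IsIsolated

theorem bot : (⊥ : Subgroup G).IsIsolated := fun _ => Or.inr (inf_bot_eq _)

theorem top : (⊤ : Subgroup G).IsIsolated := fun _ => Or.inl (mem_top _)

theorem mem_of_mem_zpowers {H : Subgroup G} (hH : H.IsIsolated) {x y : G} (hyH : y ∈ H)
    (hy : y ≠ 1) (hyx : y ∈ zpowers x) : x ∈ H :=
  (hH x).resolve_right fun h => hy <| by simpa [h] using mem_inf.2 ⟨hyx, hyH⟩

end IsIsolated

theorem isIsolated_of_card_prime {K : Subgroup G} (hK : (Nat.card K).Prime)
    (h : ∀ x, K ≤ zpowers x → x ∈ K) : K.IsIsolated := by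
  have := Nat.finite_of_card_ne_zero hK.ne_zero
  intro x
  rcases hK.eq_one_or_self_of_dvd _ (card_dvd_of_le (inf_le_right : zpowers x ⊓ K ≤ K))
    with h1 | hcard
  · exact Or.inr (card_eq_one.1 h1)
  · exact Or.inl (h x (le_inf_iff.1 (eq_of_le_of_card_ge inf_le_right hcard.ge).ge).1)

end Subgroup

def socleGen (p m : ℕ) : Multiplicative (ZMod p) × Multiplicative (ZMod (p ^ m)) :=
  (1, ofAdd ((p : ZMod (p ^ m)) ^ (m - 1)))

def graphGen (p m : ℕ) (c : ZMod p) : Multiplicative (ZMod p) × Multiplicative (ZMod (p ^ m)) :=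
  (ofAdd 1, ofAdd (c.val * (p : ZMod (p ^ m)) ^ (m - 1)))

theorem fst_pow_prime {p m : ℕ} (x : Multiplicative (ZMod p) × Multiplicative (ZMod (p ^ m))) :
    (x ^ p).1 = 1 := by
  simp [← toAdd_eq_zero]

section
variable {p m : ℕ} [hp : Fact p.Prime]

local notation "𝔾" => Multiplicative (ZMod p) × Multiplicative (ZMod (p ^ m))

theorem card_prod_zmod_pow : Nat.card 𝔾 = p ^ (m + 1) := by
  have : NeZero (p ^ m) := ⟨pow_ne_zero _ hp.out.ne_zero⟩
  simp [pow_succ']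

theorem socleGen_ne_one (hm : 1 ≤ m) : socleGen p m ≠ 1 := by
  have := (ZMod.natCast_mul_prime_pow_pred_eq_iff (p := p) hm 1 0).not.2 (by simp)
  simpa [socleGen, Prod.ext_iff, ← toAdd_eq_zero] using this

theorem socleGen_mem_zpowers (hm : 1 ≤ m) {w : 𝔾} (hw1 : w.1 = 1) (hw : w ≠ 1) :
    socleGen p m ∈ zpowers w := by
  have hw2 : toAdd w.2 ≠ 0 := fun h => hw (Prod.ext hw1 (toAdd_eq_zero.1 h))
  obtain ⟨n, hn⟩ := ZMod.exists_natCast_mul_eq_prime_pow_pred hm hw2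
  have : w ^ n = socleGen p m := Prod.ext (by simp [hw1, socleGen]) (by
    apply toAdd.injective; simpa [socleGen] using hn)
  exact this ▸ npow_mem_zpowers w n

theorem pow_prime_eq_one_or_socleGen_mem_zpowers (hm : 1 ≤ m) (x : 𝔾) :
    x ^ p = 1 ∨ socleGen p m ∈ zpowers x := by
  by_cases hx : x ^ p = 1
  · exact Or.inl hx
  · exact Or.inr (zpowers_le.2 (npow_mem_zpowers x p)
      (socleGen_mem_zpowers hm (fst_pow_prime x) hx))

theorem exists_pow_prime_ne_one (hm : 2 ≤ m) : ∃ x : 𝔾, x ^ p ≠ 1 := by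
  refine ⟨(1, ofAdd 1), fun h => ?_⟩
  have h2 := congrArg (fun x : 𝔾 => toAdd x.2) h
  simp [ZMod.natCast_eq_zero_iff] at h2
  have := (Nat.pow_dvd_pow_iff_le_right (k := m) (l := 1) hp.out.one_lt).1 (by rwa [pow_one])
  omega

theorem Subgroup.IsIsolated.eq_top_of_socleGen_mem (hm : 2 ≤ m) {H : Subgroup 𝔾}
    (hH : H.IsIsolated) (hs : socleGen p m ∈ H) : H = ⊤ := by
  refine eq_top_of_compl_subset (K := (powMonoidHom p : 𝔾 →* 𝔾).ker) ?_ fun x hx => ?_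
  · obtain ⟨x, hx⟩ := exists_pow_prime_ne_one (p := p) hm
    exact fun h => hx (by simpa using h.ge (mem_top x))
  · exact hH.mem_of_mem_zpowers hs (socleGen_ne_one (by omega))
      ((pow_prime_eq_one_or_socleGen_mem_zpowers (by omega) x).resolve_left hx)

theorem eq_one_of_fst_eq_one_of_socleGen_notMem (hm : 1 ≤ m) {H : Subgroup 𝔾}
    (hs : socleGen p m ∉ H) {w : 𝔾} (hw : w ∈ H) (hw1 : w.1 = 1) : w = 1 :=
  by_contra fun hne => hs (zpowers_le.2 hw (socleGen_mem_zpowers hm hw1 hne))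

theorem pow_prime_eq_one_of_socleGen_notMem (hm : 1 ≤ m) {H : Subgroup 𝔾}
    (hs : socleGen p m ∉ H) {h : 𝔾} (hh : h ∈ H) : h ^ p = 1 :=
  eq_one_of_fst_eq_one_of_socleGen_notMem hm hs (pow_mem hh p) (fst_pow_prime h)

theorem eq_zpowers_of_fst_eq_ofAdd_one (hm : 1 ≤ m) {H : Subgroup 𝔾} (hs : socleGen p m ∉ H)
    {g : 𝔾} (hg : g ∈ H) (hg1 : g.1 = ofAdd 1) : H = zpowers g := by
  refine le_antisymm (fun h hh => ?_) (zpowers_le.2 hg)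
  have hw : h * (g ^ (toAdd h.1).val)⁻¹ = 1 := by
    refine eq_one_of_fst_eq_one_of_socleGen_notMem hm hs
      (mul_mem hh (inv_mem (pow_mem hg _))) ?_
    rw [Prod.fst_mul, Prod.fst_inv, Prod.pow_fst, hg1, ← ofAdd_nsmul, nsmul_one,
      ZMod.natCast_zmod_val, ofAdd_toAdd, mul_inv_cancel]
  rw [mul_inv_eq_one.1 hw]
  exact npow_mem_zpowers g _

theorem exists_zpowers_graphGen_eq (hm : 1 ≤ m) {H : Subgroup 𝔾} (hs : socleGen p m ∉ H)
    (hH : H ≠ ⊥) : ∃ c, zpowers (graphGen p m c) = H := by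
  obtain ⟨h, hh, hne⟩ := H.bot_or_exists_ne_one.resolve_left hH
  have ha : toAdd h.1 ≠ 0 := fun ha =>
    hne (eq_one_of_fst_eq_one_of_socleGen_notMem hm hs hh (toAdd_eq_zero.1 ha))
  set g := h ^ ((toAdd h.1)⁻¹).val
  have hg : g ∈ H := pow_mem hh _
  have hg1 : g.1 = ofAdd 1 := by
    rw [Prod.pow_fst, ← ofAdd_toAdd h.1, ← ofAdd_nsmul, nsmul_eq_mul, ZMod.natCast_zmod_val,
      toAdd_ofAdd, inv_mul_cancel₀ ha]
  have hgp : p * toAdd g.2 = 0 := by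
    simpa [← toAdd_eq_zero] using
      congrArg (fun x : 𝔾 => toAdd x.2) (pow_prime_eq_one_of_socleGen_notMem hm hs hg)
  obtain ⟨t, ht⟩ := ZMod.exists_eq_natCast_mul_of_prime_mul_eq_zero hm hgp
  have hgt : graphGen p m t = g := Prod.ext hg1.symm <| toAdd.injective <| by
    rw [ht, graphGen, toAdd_ofAdd, ZMod.natCast_mul_prime_pow_pred_eq_iff hm,
      ZMod.natCast_zmod_val]
  exact ⟨t, by rw [hgt, ← eq_zpowers_of_fst_eq_ofAdd_one hm hs hg hg1]⟩

theorem graphGen_injective (hm : 1 ≤ m) : Function.Injective (graphGen p m) := by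
  intro c c' h
  have h2 : (c.val : ZMod (p ^ m)) * _ = c'.val * _ := congrArg (fun x : 𝔾 => toAdd x.2) h
  rwa [ZMod.natCast_mul_prime_pow_pred_eq_iff hm, ZMod.natCast_zmod_val,
    ZMod.natCast_zmod_val] at h2

theorem orderOf_graphGen (hm : 1 ≤ m) (c : ZMod p) : orderOf (graphGen p m c) = p := by
  refine orderOf_eq_prime (Prod.ext (fst_pow_prime _) ?_) fun h => ?_
  · apply toAdd.injective
    rw [Prod.pow_snd, toAdd_pow, graphGen, toAdd_ofAdd, nsmul_eq_mul, mul_left_comm, ← pow_succ',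
      Nat.sub_add_cancel hm, ← Nat.cast_pow, ZMod.natCast_self, mul_zero]
    rfl
  · exact one_ne_zero (congrArg (fun x : 𝔾 => toAdd x.1) h)

theorem card_zpowers_graphGen (hm : 1 ≤ m) (c : ZMod p) :
    Nat.card (zpowers (graphGen p m c)) = p := by
  rw [Nat.card_zpowers, orderOf_graphGen hm]

theorem socleGen_notMem_zpowers_graphGen (hm : 1 ≤ m) (c : ZMod p) :
    socleGen p m ∉ zpowers (graphGen p m c) := by
  rw [← mem_powers_iff_mem_zpowers]
  rintro ⟨n, hn⟩
  have hn1 := congrArg (fun x : 𝔾 => toAdd x.1) hn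
  simp [graphGen, socleGen, ZMod.natCast_eq_zero_iff] at hn1
  rw [← orderOf_graphGen hm c, orderOf_dvd_iff_pow_eq_one] at hn1
  exact socleGen_ne_one hm (hn.symm.trans hn1)

theorem zpowers_graphGen_injective (hm : 1 ≤ m) :
    Function.Injective fun c : ZMod p => zpowers (graphGen p m c) := by
  intro c c' (h : zpowers _ = zpowers _)
  have hmem : graphGen p m c' * (graphGen p m c)⁻¹ ∈ zpowers (graphGen p m c) :=
    mul_mem (h ▸ mem_zpowers _) (inv_mem (mem_zpowers _))
  have := eq_one_of_fst_eq_one_of_socleGen_notMem hm (socleGen_notMem_zpowers_graphGen hm c)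
    hmem (by simp [graphGen])
  exact graphGen_injective hm (mul_inv_eq_one.1 this).symm

theorem isIsolated_zpowers_graphGen (hm : 1 ≤ m) (c : ZMod p) :
    (zpowers (graphGen p m c)).IsIsolated := by
  refine isIsolated_of_card_prime (by rw [card_zpowers_graphGen hm c]; exact hp.out)
    fun x hx => ?_
  obtain ⟨n, hn : x ^ n = graphGen p m c⟩ := mem_powers_iff_mem_zpowers.2 (hx (mem_zpowers _))
  have hpn : ¬p ∣ n := fun hdvd => by
    have := congrArg (fun y : 𝔾 => toAdd y.1) hn
    simp [graphGen, (ZMod.natCast_eq_zero_iff n p).2 hdvd] at this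
  have hord : orderOf x = p := by
    have := ((IsPGroup.of_card card_prod_zmod_pow).orderOf_coprime
      (hp.out.coprime_iff_not_dvd.2 hpn) x).orderOf_pow
    rwa [hn, orderOf_graphGen hm, eq_comm] at this
  have := eq_of_le_of_card_ge hx (by rw [Nat.card_zpowers, hord, card_zpowers_graphGen hm])
  exact this ▸ mem_zpowers x

theorem isIsolated_iff (hm : 2 ≤ m) {H : Subgroup 𝔾} :
    H.IsIsolated ↔ H = ⊥ ∨ H = ⊤ ∨ ∃ c, zpowers (graphGen p m c) = H := by
  refine ⟨fun hH => ?_, ?_⟩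
  · by_cases hs : socleGen p m ∈ H
    · exact Or.inr (Or.inl (hH.eq_top_of_socleGen_mem hm hs))
    by_cases hbot : H = ⊥
    · exact Or.inl hbot
    · exact Or.inr (Or.inr (exists_zpowers_graphGen_eq (by omega) hs hbot))
  · rintro (rfl | rfl | ⟨c, rfl⟩)
    · exact IsIsolated.bot
    · exact IsIsolated.top
    · exact isIsolated_zpowers_graphGen (by omega) c

theorem card_top_ne_prime (hm : 1 ≤ m) : Nat.card (⊤ : Subgroup 𝔾) ≠ p := by
  rw [card_top, card_prod_zmod_pow]
  simpa using (Nat.pow_lt_pow_right hp.out.one_lt (show 1 < m + 1 by omega)).ne'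

theorem isIsolated_and_card_eq_prime_iff (hm : 2 ≤ m) {H : Subgroup 𝔾} :
    H.IsIsolated ∧ Nat.card H = p ↔ ∃ c, zpowers (graphGen p m c) = H := by
  rw [isIsolated_iff hm]
  constructor
  · rintro ⟨rfl | rfl | hc, hcard⟩
    · exact absurd (card_bot.symm.trans hcard) hp.out.one_lt.ne
    · exact absurd hcard (card_top_ne_prime (by omega))
    · exact hc
  · rintro ⟨c, rfl⟩
    exact ⟨Or.inr (Or.inr ⟨c, rfl⟩), card_zpowers_graphGen (by omega) c⟩

end

theorem stmt13 {p : ℕ} [Fact p.Prime] {m : ℕ} (hm : 2 ≤ m) :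
    Nat.card {H : Subgroup (Multiplicative (ZMod p) × Multiplicative (ZMod (p ^ m))) |
        H.IsIsolated} = p + 2 ∧
    Nat.card {H : Subgroup (Multiplicative (ZMod p) × Multiplicative (ZMod (p ^ m))) |
        H.IsIsolated ∧ Nat.card H = p} = p := by
  set R := Set.range fun c : ZMod p => zpowers (graphGen p m c)
  have hR : Nat.card R = p := by
    rw [Nat.card_range_of_injective (zpowers_graphGen_injective (by omega)), Nat.card_zmod]
  have hcardp : {H : Subgroup _ | H.IsIsolated ∧ Nat.card H = p} = R :=
    Set.ext fun _ => isIsolated_and_card_eq_prime_iff hm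
  have hiso : {H : Subgroup _ | H.IsIsolated} = insert ⊥ (insert ⊤ R) :=
    Set.ext fun _ => by simp [R, isIsolated_iff hm]
  refine ⟨?_, hcardp ▸ hR⟩
  rw [hiso, Nat.card_coe_set_eq, Set.ncard_insert_of_notMem, Set.ncard_insert_of_notMem,
    ← Nat.card_coe_set_eq, hR]
  · rw [← hcardp]
    exact fun h => card_top_ne_prime (by omega) h.2
  · rintro (h | h)
    · exact bot_ne_top h
    · rw [← hcardp] at h
      exact (Fact.out : p.Prime).one_lt.ne (card_bot.symm.trans h.2)
end

section
/- For a prime p and m, n ≥ 2, the group Z_p × Z_{p^m} × Z_{p^n} has exactly p² + 2 isolated subgroups. -/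
open Subgroup Multiplicative

namespace Stmt14

lemma isolated_pow_mem {G : Type*} [Group G] {H : Subgroup G} (hH : H.IsIsolated)
    {x : G} {k : ℕ} (hk : x ^ k ∈ H) (hne : x ^ k ≠ 1) : x ∈ H := by
  rcases hH x with h | h
  · exact h
  · exfalso
    have hmem : x ^ k ∈ zpowers x ⊓ H :=
      Subgroup.mem_inf.mpr ⟨mem_zpowers_iff.mpr ⟨(k : ℤ), by rw [zpow_natCast]⟩, hk⟩
    rw [h, Subgroup.mem_bot] at hmem
    exact hne hmem

section ZModAux
variable {p : ℕ} [hp : Fact p.Prime]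

lemma zker {k : ℕ} (hk : 2 ≤ k) {x : ZMod (p ^ k)} (hx : (p : ZMod (p ^ k)) * x = 0) :
    ∃ t : ℕ, t < p ∧ x = ((t * p ^ (k - 1) : ℕ) : ZMod (p ^ k)) := by
  haveI : NeZero (p ^ k) := ⟨pow_ne_zero _ hp.out.ne_zero⟩
  have hxv : x = ((x.val : ℕ) : ZMod (p ^ k)) := by
    rw [ZMod.natCast_val, ZMod.cast_id]
  have hx' : ((p * x.val : ℕ) : ZMod (p ^ k)) = 0 := by
    push_cast
    rw [← hxv]; exact hx
  rw [ZMod.natCast_eq_zero_iff] at hx'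
  have hk1 : k - 1 + 1 = k := by omega
  have hpk : p ^ k = p * p ^ (k - 1) := by
    conv_lhs => rw [← hk1, pow_succ']
  have h1 : p ^ (k - 1) ∣ x.val := by
    have hx'' : p * p ^ (k - 1) ∣ p * x.val := by rw [← hpk]; exact hx'
    exact (Nat.mul_dvd_mul_iff_left hp.out.pos).mp hx''
  obtain ⟨t, ht⟩ := h1
  refine ⟨t, ?_, ?_⟩
  · have hv := ZMod.val_lt x
    rw [ht, hpk, mul_comm p] at hv
    exact lt_of_mul_lt_mul_left hv (Nat.zero_le _)
  · rw [hxv, ht, mul_comm]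

lemma zroot {k : ℕ} (hk : 2 ≤ k) {x : ZMod (p ^ k)} (hx : (p : ZMod (p ^ k)) * x = 0) :
    ∃ y : ZMod (p ^ k), (p : ZMod (p ^ k)) * y = x := by
  obtain ⟨t, -, rfl⟩ := zker hk hx
  refine ⟨((t * p ^ (k - 2) : ℕ) : ZMod (p ^ k)), ?_⟩
  have hnat : p * (t * p ^ (k - 2)) = t * p ^ (k - 1) := by
    have : p * p ^ (k - 2) = p ^ (k - 1) := by
      rw [← pow_succ']; congr 1; omega
    rw [mul_left_comm, this]
  push_cast [← hnat]
  ring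

end ZModAux

section GAux
variable (p m n : ℕ) [hp : Fact p.Prime]

abbrev GG := Multiplicative (ZMod p) × Multiplicative (ZMod (p ^ m)) × Multiplicative (ZMod (p ^ n))

def gen (b c : ZMod p) : GG p m n :=
  (ofAdd (1 : ZMod p), ofAdd ((b.val * p ^ (m - 1) : ℕ) : ZMod (p ^ m)),
    ofAdd ((c.val * p ^ (n - 1) : ℕ) : ZMod (p ^ n)))

omit hp in
lemma gg_eq_iff (x y : GG p m n) :
    x = y ↔ toAdd x.1 = toAdd y.1 ∧ toAdd x.2.1 = toAdd y.2.1 ∧ toAdd x.2.2 = toAdd y.2.2 := by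
  constructor
  · rintro rfl; exact ⟨rfl, rfl, rfl⟩
  · rintro ⟨h1, h2, h3⟩
    ext <;> simp_all

omit hp in
lemma psmul_cast {k : ℕ} (hk : 1 ≤ k) (v : ℕ) :
    (p : ZMod (p ^ k)) * ((v * p ^ (k - 1) : ℕ) : ZMod (p ^ k)) = 0 := by
  have hnat : p * (v * p ^ (k - 1)) = v * p ^ k := by
    rw [mul_left_comm, ← pow_succ']; congr 2; omega
  rw [← Nat.cast_mul, hnat, Nat.cast_mul, ZMod.natCast_self, mul_zero]

lemma gen_pow_p (hm : 1 ≤ m) (hn : 1 ≤ n) (b c : ZMod p) : gen p m n b c ^ p = 1 := by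
  have h2 := psmul_cast (p := p) hm b.val
  have h3 := psmul_cast (p := p) hn c.val
  push_cast at h2 h3
  rw [gg_eq_iff]
  refine ⟨?_, ?_, ?_⟩ <;> simp [gen, nsmul_eq_mul] <;> simp_all

lemma gen_ne_one (b c : ZMod p) : gen p m n b c ≠ 1 := by
  intro h
  have := ((gg_eq_iff p m n _ _).mp h).1
  simp [gen] at this

lemma order_pp (x : GG p m n) : ∃ e : ℕ, orderOf x = p ^ e := by
  haveI : NeZero (p ^ m) := ⟨pow_ne_zero _ hp.out.ne_zero⟩
  haveI : NeZero (p ^ n) := ⟨pow_ne_zero _ hp.out.ne_zero⟩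
  have hcard : Fintype.card (GG p m n) = p ^ (1 + m + n) := by
    simp [Fintype.card_prod, ZMod.card, pow_add, pow_one]; ring
  have h := orderOf_dvd_card (x := x)
  rw [hcard] at h
  obtain ⟨e, -, he⟩ := (Nat.dvd_prime_pow hp.out).mp h
  exact ⟨e, he⟩

lemma isolated_top {H : Subgroup (GG p m n)} (hH : H.IsIsolated)
    {u : GG p m n} (hu : u ∈ H) (hup : u ^ p ≠ 1) : H = ⊤ := by
  have socle : ∀ x : GG p m n, x ^ p = 1 → x ∈ H := by
    intro x hx
    have h1 : (u * x) ^ p ∈ H := by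
      rw [mul_pow, hx, mul_one]; exact pow_mem hu p
    have h2 : (u * x) ^ p ≠ 1 := by rwa [mul_pow, hx, mul_one]
    have h3 := isolated_pow_mem hH h1 h2
    simpa using mul_mem (inv_mem hu) h3
  rw [eq_top_iff']
  intro x
  by_cases hx1 : x = 1
  · rw [hx1]; exact one_mem H
  obtain ⟨e, he⟩ := order_pp p m n x
  have he1 : 1 ≤ e := by
    by_contra h
    have : e = 0 := by omega
    rw [this, pow_zero] at he
    exact hx1 (orderOf_eq_one_iff.mp he)
  have hy : (x ^ p ^ (e - 1)) ^ p = 1 := by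
    rw [← pow_mul, ← pow_succ]
    have : e - 1 + 1 = e := by omega
    rw [this, ← he]
    exact pow_orderOf_eq_one x
  have hyne : x ^ p ^ (e - 1) ≠ 1 := by
    intro hcon
    have := orderOf_dvd_of_pow_eq_one hcon
    rw [he] at this
    have hlt : p ^ (e - 1) < p ^ e := Nat.pow_lt_pow_right hp.out.one_lt (by omega)
    have hle := Nat.le_of_dvd (pow_pos hp.out.pos _) this
    omega
  exact isolated_pow_mem hH (socle _ hy) hyne

lemma isolated_top_of_firstzero (hm : 2 ≤ m) (hn : 2 ≤ n) {H : Subgroup (GG p m n)}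
    (hH : H.IsIsolated) {x : GG p m n} (hx : x ∈ H) (hx1 : x ≠ 1) (hxp : x ^ p = 1)
    (hfst : toAdd x.1 = 0) : H = ⊤ := by
  have hb : (p : ZMod (p ^ m)) * toAdd x.2.1 = 0 := by
    have := congrArg (fun z : GG p m n => toAdd z.2.1) hxp
    simpa [nsmul_eq_mul] using this
  have hc : (p : ZMod (p ^ n)) * toAdd x.2.2 = 0 := by
    have := congrArg (fun z : GG p m n => toAdd z.2.2) hxp
    simpa [nsmul_eq_mul] using this
  obtain ⟨b₂, hb₂⟩ := zroot hm hb
  obtain ⟨c₂, hc₂⟩ := zroot hn hc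
  set t : GG p m n := (1, ofAdd b₂, ofAdd c₂) with htdef
  have ht : t ^ p = x := by
    rw [gg_eq_iff]
    refine ⟨?_, ?_, ?_⟩ <;> simp [htdef, nsmul_eq_mul, hb₂, hc₂, hfst.symm]
  have htH : t ∈ H := isolated_pow_mem hH (ht ▸ hx) (ht.symm ▸ hx1)
  exact isolated_top p m n hH htH (ht.symm ▸ hx1)

lemma gen_isolated (hm : 2 ≤ m) (hn : 2 ≤ n) (b c : ZMod p) :
    (zpowers (gen p m n b c)).IsIsolated := by
  intro x
  by_cases hbot : zpowers x ⊓ zpowers (gen p m n b c) = ⊥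
  · exact Or.inr hbot
  left
  have hex : ∃ y ∈ zpowers x ⊓ zpowers (gen p m n b c), y ≠ 1 := by
    simpa using Subgroup.ne_bot_iff_exists_ne_one.mp hbot
  obtain ⟨y, hy, hy1⟩ := hex
  obtain ⟨hyx, hyg⟩ := Subgroup.mem_inf.mp hy
  obtain ⟨k, hk⟩ := mem_zpowers_iff.mp hyx
  obtain ⟨j, hj⟩ := mem_zpowers_iff.mp hyg
  have hgp := gen_pow_p p m n (by omega) (by omega) b c
  have hjp : ¬ ((p : ℤ) ∣ j) := by
    rintro ⟨t, rfl⟩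
    apply hy1
    rw [← hj, zpow_mul, zpow_natCast, hgp, one_zpow]
  have hy1c : toAdd y.1 = ((j : ℤ) : ZMod p) := by
    rw [← hj]
    simp [gen, zsmul_eq_mul]
  have hjz : ((j : ℤ) : ZMod p) ≠ 0 := fun h0 =>
    hjp ((ZMod.intCast_zmod_eq_zero_iff_dvd _ _).mp h0)
  have hkx : toAdd y.1 = ((k : ℤ) : ZMod p) * toAdd x.1 := by
    rw [← hk]; simp [zsmul_eq_mul]
  have hkz : ((k : ℤ) : ZMod p) ≠ 0 := by
    intro h0
    rw [hy1c, h0, zero_mul] at hkx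
    exact hjz hkx
  have hpk : ¬ ((p : ℤ) ∣ k) := fun hd => hkz ((ZMod.intCast_zmod_eq_zero_iff_dvd _ _).mpr hd)
  have hyp : y ^ p = 1 := by
    rw [← hj, ← zpow_natCast, ← zpow_mul, mul_comm, zpow_mul, zpow_natCast, hgp, one_zpow]
  have hxkp : x ^ (k * (p : ℤ)) = 1 := by
    rw [zpow_mul, hk, zpow_natCast]
    exact hyp
  have hdvd : (orderOf x : ℤ) ∣ k * (p : ℤ) := orderOf_dvd_iff_zpow_eq_one.mpr hxkp
  obtain ⟨e, he⟩ := order_pp p m n x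
  have hdvdn : orderOf x ∣ k.natAbs * p := by
    have h1 := Int.natAbs_dvd_natAbs.mpr hdvd
    simpa [Int.natAbs_mul] using h1
  have hnd : ¬ p ∣ k.natAbs := by
    intro hd
    exact hpk (dvd_trans (Int.natCast_dvd_natCast.mpr hd) ((Int.natAbs_dvd).mpr dvd_rfl))
  have hcop : Nat.Coprime (p ^ e) k.natAbs :=
    ((Nat.Prime.coprime_iff_not_dvd hp.out).mpr hnd).pow_left e
  have hop : orderOf x ∣ p := by
    rw [he] at hdvdn ⊢
    exact hcop.dvd_of_dvd_mul_left hdvdn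
  have hxp : x ^ p = 1 := orderOf_dvd_iff_pow_eq_one.mp hop
  set kk : ZMod p := ((k : ℤ) : ZMod p) with hkk
  set k' : ℕ := (kk⁻¹).val with hk'
  have hmod : ((k * (k' : ℤ) - 1 : ℤ) : ZMod p) = 0 := by
    push_cast
    rw [ZMod.natCast_val, ZMod.cast_id, ← hkk, mul_inv_cancel₀ hkz, sub_self]
  obtain ⟨t, ht⟩ := (ZMod.intCast_zmod_eq_zero_iff_dvd _ _).mp hmod
  have hco : k * (k' : ℤ) = 1 + (p : ℤ) * t := by linarith
  have hxy : y ^ (k' : ℤ) = x := by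
    rw [← hk, ← zpow_mul, hco, zpow_add, zpow_one, zpow_mul, zpow_natCast, hxp, one_zpow, mul_one]
  rw [← hxy]
  exact zpow_mem hyg _

lemma isolated_cases (hm : 2 ≤ m) (hn : 2 ≤ n) {H : Subgroup (GG p m n)} (hH : H.IsIsolated) :
    H = ⊥ ∨ H = ⊤ ∨ ∃ b c : ZMod p, H = zpowers (gen p m n b c) := by
  by_cases hbot : H = ⊥
  · exact Or.inl hbot
  by_cases htop : H = ⊤
  · exact Or.inr (Or.inl htop)
  refine Or.inr (Or.inr ?_)
  have hex : ∃ h ∈ H, h ≠ 1 := by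
    simpa using Subgroup.ne_bot_iff_exists_ne_one.mp hbot
  obtain ⟨h0, hh0, hh1⟩ := hex
  have hsoc : ∀ y ∈ H, y ^ p = 1 := by
    intro y hy
    by_contra hyp
    exact htop (isolated_top p m n hH hy hyp)
  have hfst : ∀ y ∈ H, y ≠ 1 → toAdd y.1 ≠ 0 := by
    intro y hy hy1 h0'
    exact htop (isolated_top_of_firstzero p m n hm hn hH hy hy1 (hsoc y hy) h0')
  set a : ZMod p := toAdd h0.1 with ha_def
  have ha : a ≠ 0 := hfst h0 hh0 hh1
  set K : ℕ := (a⁻¹).val with hK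
  set h' : GG p m n := h0 ^ K with hh'def
  have hh' : h' ∈ H := pow_mem hh0 K
  have h'1 : toAdd h'.1 = 1 := by
    have : toAdd h'.1 = K • a := by simp [hh'def, ha_def]
    rw [this, nsmul_eq_mul, hK, ZMod.natCast_val, ZMod.cast_id, inv_mul_cancel₀ ha]
  have h'p : h' ^ p = 1 := by
    rw [hh'def, ← pow_mul, mul_comm, pow_mul, hsoc h0 hh0, one_pow]
  have h'ne : h' ≠ 1 := by
    intro hcon
    rw [hcon] at h'1
    simp at h'1
  have hb : (p : ZMod (p ^ m)) * toAdd h'.2.1 = 0 := by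
    have := congrArg (fun z : GG p m n => toAdd z.2.1) h'p
    simpa [nsmul_eq_mul] using this
  have hc : (p : ZMod (p ^ n)) * toAdd h'.2.2 = 0 := by
    have := congrArg (fun z : GG p m n => toAdd z.2.2) h'p
    simpa [nsmul_eq_mul] using this
  obtain ⟨tb, htb, htb2⟩ := zker hm hb
  obtain ⟨tc, htc, htc2⟩ := zker hn hc
  refine ⟨(tb : ZMod p), (tc : ZMod p), ?_⟩
  have hgen : h' = gen p m n (tb : ZMod p) (tc : ZMod p) := by
    rw [gg_eq_iff]
    refine ⟨?_, ?_, ?_⟩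
    · simp only [gen, toAdd_ofAdd]
      exact h'1
    · simp only [gen, toAdd_ofAdd]
      rw [htb2, ZMod.val_cast_of_lt htb]
    · simp only [gen, toAdd_ofAdd]
      rw [htc2, ZMod.val_cast_of_lt htc]
  apply le_antisymm
  · intro y hy
    by_cases hy1 : y = 1
    · rw [hy1]; exact one_mem _
    have hay := hfst y hy hy1
    set ay : ZMod p := toAdd y.1 with hay_def
    set z : GG p m n := y * (h' ^ ay.val)⁻¹ with hz
    have hzH : z ∈ H := mul_mem hy (inv_mem (pow_mem hh' _))
    have hz1 : toAdd z.1 = 0 := by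
      have : toAdd z.1 = ay + (-(ay.val • toAdd h'.1)) := by
        simp [hz, hay_def]
      rw [this, h'1, nsmul_eq_mul, mul_one, ZMod.natCast_val, ZMod.cast_id, add_neg_cancel]
    have hzp : z ^ p = 1 := by
      rw [hz, mul_pow, hsoc y hy, one_mul, ← inv_pow, ← pow_mul, mul_comm ay.val p, pow_mul,
        inv_pow, h'p, inv_one, one_pow]
    have hz_eq : z = 1 := by
      by_contra hzne
      exact htop (isolated_top_of_firstzero p m n hm hn hH hzH hzne hzp hz1)
    have hyh : y = h' ^ ay.val := by
      rw [hz, mul_inv_eq_one] at hz_eq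
      exact hz_eq
    rw [hyh, hgen]
    exact pow_mem (mem_zpowers _) _
  · rw [← hgen]
    exact (zpowers_le).mpr hh'

lemma bot_isolated : (⊥ : Subgroup (GG p m n)).IsIsolated := fun x => Or.inr (inf_bot_eq _)

lemma top_isolated : (⊤ : Subgroup (GG p m n)).IsIsolated := fun x => Or.inl trivial

lemma gen_ne_bot (b c : ZMod p) : zpowers (gen p m n b c) ≠ ⊥ := by
  intro hcon
  exact gen_ne_one p m n b c (Subgroup.zpowers_eq_bot.mp hcon)

lemma gen_ne_top (hm : 2 ≤ m) (hn : 2 ≤ n) (b c : ZMod p) : zpowers (gen p m n b c) ≠ ⊤ := by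
  intro hcon
  set w : GG p m n := (1, ofAdd (1 : ZMod (p ^ m)), 1) with hw
  have hwmem : w ∈ zpowers (gen p m n b c) := by rw [hcon]; trivial
  obtain ⟨j, hj⟩ := mem_zpowers_iff.mp hwmem
  have h2 : ((j : ℤ) : ZMod (p ^ m)) * ((b.val * p ^ (m - 1) : ℕ) : ZMod (p ^ m)) = 1 := by
    have := congrArg (fun z : GG p m n => toAdd z.2.1) hj
    simpa [gen, hw, zsmul_eq_mul] using this
  have h3 : (p : ZMod (p ^ m)) = 0 := by
    have := congrArg (fun z => (p : ZMod (p ^ m)) * z) h2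
    simp only [mul_one] at this
    rw [mul_left_comm, psmul_cast p (k := m) (by omega) b.val, mul_zero] at this
    exact this.symm
  rw [ZMod.natCast_eq_zero_iff] at h3
  have hlt : p < p ^ m := by
    calc p = p ^ 1 := (pow_one p).symm
    _ < p ^ m := Nat.pow_lt_pow_right hp.out.one_lt (by omega)
  exact absurd (Nat.le_of_dvd hp.out.pos h3) (by omega)

lemma gen_inj (hm : 2 ≤ m) (hn : 2 ≤ n) :
    Function.Injective (fun bc : ZMod p × ZMod p => zpowers (gen p m n bc.1 bc.2)) := by
  haveI : NeZero p := ⟨hp.out.ne_zero⟩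
  rintro ⟨b, c⟩ ⟨b', c'⟩ h
  simp only at h
  have hmem : gen p m n b c ∈ zpowers (gen p m n b' c') := h ▸ mem_zpowers _
  obtain ⟨j, hj⟩ := mem_zpowers_iff.mp hmem
  have h1 : ((j : ℤ) : ZMod p) = 1 := by
    have := congrArg (fun z : GG p m n => toAdd z.1) hj
    simpa [gen, zsmul_eq_mul] using this
  have hdvd : (p : ℤ) ∣ (j - 1) := by
    rw [← ZMod.intCast_zmod_eq_zero_iff_dvd]
    push_cast
    rw [h1, sub_self]
  obtain ⟨t, ht⟩ := hdvd
  have hj' : gen p m n b' c' ^ j = gen p m n b' c' := by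
    have hjeq : j = 1 + (p : ℤ) * t := by linarith
    rw [hjeq, zpow_add, zpow_one, zpow_mul, zpow_natCast, gen_pow_p p m n (by omega) (by omega),
      one_zpow, mul_one]
  rw [hj'] at hj
  -- component equalities
  have hvm : b'.val * p ^ (m - 1) < p ^ m ∧ b.val * p ^ (m - 1) < p ^ m := by
    constructor <;>
    · calc _ < p * p ^ (m - 1) := by
            exact (Nat.mul_lt_mul_right (pow_pos hp.out.pos _)).mpr (ZMod.val_lt _)
        _ = p ^ m := by rw [← pow_succ']; congr 1; omega
  have hvn : c'.val * p ^ (n - 1) < p ^ n ∧ c.val * p ^ (n - 1) < p ^ n := by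
    constructor <;>
    · calc _ < p * p ^ (n - 1) := by
            exact (Nat.mul_lt_mul_right (pow_pos hp.out.pos _)).mpr (ZMod.val_lt _)
        _ = p ^ n := by rw [← pow_succ']; congr 1; omega
  have h2 : ((b'.val * p ^ (m - 1) : ℕ) : ZMod (p ^ m)) = ((b.val * p ^ (m - 1) : ℕ) : ZMod (p ^ m)) := by
    have := congrArg (fun z : GG p m n => toAdd z.2.1) hj
    simpa [gen] using this
  have h3 : ((c'.val * p ^ (n - 1) : ℕ) : ZMod (p ^ n)) = ((c.val * p ^ (n - 1) : ℕ) : ZMod (p ^ n)) := by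
    have := congrArg (fun z : GG p m n => toAdd z.2.2) hj
    simpa [gen] using this
  haveI : NeZero (p ^ m) := ⟨pow_ne_zero _ hp.out.ne_zero⟩
  haveI : NeZero (p ^ n) := ⟨pow_ne_zero _ hp.out.ne_zero⟩
  have h2' : b'.val * p ^ (m - 1) = b.val * p ^ (m - 1) := by
    have := congrArg ZMod.val h2
    rwa [ZMod.val_cast_of_lt hvm.1, ZMod.val_cast_of_lt hvm.2] at this
  have h3' : c'.val * p ^ (n - 1) = c.val * p ^ (n - 1) := by
    have := congrArg ZMod.val h3
    rwa [ZMod.val_cast_of_lt hvn.1, ZMod.val_cast_of_lt hvn.2] at this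
  have hb : b = b' := by
    have hv : b.val = b'.val := by
      have := Nat.eq_of_mul_eq_mul_right (pow_pos hp.out.pos (m - 1)) h2'
      omega
    have : ((b.val : ℕ) : ZMod p) = ((b'.val : ℕ) : ZMod p) := by rw [hv]
    rwa [ZMod.natCast_val, ZMod.cast_id, ZMod.natCast_val, ZMod.cast_id] at this
  have hc : c = c' := by
    have hv : c.val = c'.val := by
      have := Nat.eq_of_mul_eq_mul_right (pow_pos hp.out.pos (n - 1)) h3'
      omega
    have : ((c.val : ℕ) : ZMod p) = ((c'.val : ℕ) : ZMod p) := by rw [hv]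
    rwa [ZMod.natCast_val, ZMod.cast_id, ZMod.natCast_val, ZMod.cast_id] at this
  rw [hb, hc]

end GAux

end Stmt14

open Stmt14 in
theorem stmt14 {p : ℕ} [Fact p.Prime] {m n : ℕ} (hm : 2 ≤ m) (hn : 2 ≤ n) :
    Nat.card {H : Subgroup (Multiplicative (ZMod p) × Multiplicative (ZMod (p ^ m)) ×
        Multiplicative (ZMod (p ^ n))) | H.IsIsolated} = p ^ 2 + 2 := by
  classical
  haveI : NeZero p := ⟨(Fact.out : p.Prime).ne_zero⟩
  set f : ZMod p × ZMod p → Subgroup (GG p m n) :=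
    fun bc => zpowers (gen p m n bc.1 bc.2) with hf
  have hchar : {H : Subgroup (GG p m n) | H.IsIsolated} = ({⊥, ⊤} ∪ Set.range f : Set _) := by
    ext H
    constructor
    · intro hH
      rcases isolated_cases p m n hm hn hH with h | h | ⟨b, c, h⟩
      · exact Or.inl (Or.inl h)
      · exact Or.inl (Or.inr h)
      · exact Or.inr ⟨(b, c), h.symm⟩
    · rintro ((rfl | rfl) | ⟨⟨b, c⟩, rfl⟩)
      · exact bot_isolated p m n
      · exact top_isolated p m n
      · exact gen_isolated p m n hm hn b c
  rw [show {H : Subgroup (Multiplicative (ZMod p) × Multiplicative (ZMod (p ^ m)) ×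
        Multiplicative (ZMod (p ^ n))) | H.IsIsolated} = ({⊥, ⊤} ∪ Set.range f : Set _) from hchar]
  rw [Nat.card_coe_set_eq]
  have hdisj : Disjoint ({⊥, ⊤} : Set (Subgroup (GG p m n))) (Set.range f) := by
    rw [Set.disjoint_left]
    rintro y (rfl | rfl) ⟨⟨b, c⟩, hbc⟩
    · exact gen_ne_bot p m n b c hbc
    · exact gen_ne_top p m n hm hn b c hbc
  have hfin1 : ({⊥, ⊤} : Set (Subgroup (GG p m n))).Finite :=
    (Set.finite_singleton _).insert _
  have hfin2 : (Set.range f).Finite := Set.finite_range _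
  rw [Set.ncard_union_eq hdisj hfin1 hfin2]
  have hne : (⊥ : Subgroup (GG p m n)) ≠ ⊤ := by
    intro hcon
    have : gen p m n 0 0 ∈ (⊥ : Subgroup (GG p m n)) := by rw [hcon]; trivial
    exact gen_ne_one p m n 0 0 (Subgroup.mem_bot.mp this)
  have h2 : ({⊥, ⊤} : Set (Subgroup (GG p m n))).ncard = 2 := Set.ncard_pair hne
  have hr : (Set.range f).ncard = p ^ 2 := by
    rw [← Set.image_univ, Set.ncard_image_of_injective _ (gen_inj p m n hm hn),
      Set.ncard_univ, Nat.card_prod, Nat.card_zmod, sq]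
  rw [h2, hr]
  ring
end

section
/- For a prime p and m ≥ 2, the group Z_p × Z_p × Z_{p^m} has exactly 2p² + p + 2 isolated subgroups: 1, G, p² + p subgroups of order p, and p² subgroups of order p². -/
/-!
Write the group additively as `E × ℤ/p^m` with `E = (ℤ/p)²`. If an isolated subgroup `K` contains
some `(0, c) ≠ 0`, it contains `(0, 1)`, of which `(0, c)` is a multiple; then it contains every
`(u, 1)`, because `p • (u, 1) = p • (0, 1) ≠ 0` as `m ≥ 2`; so `K` is everything. Conversely, if
`K` meets the cyclic factor trivially, then `K` is isolated: a multiple `n • x ∈ K` with `p ∣ n`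
lies in `p • G ⊆ 0 × ℤ/p^m`, and one with `p ∤ n` generates `⟨x⟩`.

A subgroup meeting `0 × ℤ/p^m` trivially is killed by `p`, hence lies in `E × p^(m-1)ℤ/p^m`, and
there it is the graph of a partial linear functional on `E`. Counting functionals on the `p + 1`
lines and on `E` itself gives `p (p + 1)` isolated subgroups of order `p` and `p²` of order `p²`;
together with `0` and `G` this makes `2p² + p + 2`.
-/

attribute [to_additive] Subgroup.IsIsolated

namespace Subgroup

variable {G G' : Type*} [Group G] [Group G']

@[to_additive]
theorem isIsolated_iff_forall_zpow_mem {H : Subgroup G} :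
    H.IsIsolated ↔ ∀ (x : G) (n : ℤ), x ^ n ∈ H → x ^ n = 1 ∨ x ∈ H := by
  simp only [IsIsolated, eq_bot_iff_forall, mem_inf, mem_zpowers_iff, and_imp,
    forall_exists_index, forall_apply_eq_imp_iff]
  exact forall_congr' fun x => by by_cases hx : x ∈ H <;> simp [hx]

theorem isIsolated_map_mulEquiv_iff (e : G ≃* G') {H : Subgroup G} :
    (H.map e.toMonoidHom).IsIsolated ↔ H.IsIsolated := by
  rw [isIsolated_iff_forall_zpow_mem, isIsolated_iff_forall_zpow_mem,
    ← e.toEquiv.forall_congr_right]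
  simp [← map_zpow]

@[to_additive]
theorem isIsolated_bot : (⊥ : Subgroup G).IsIsolated := fun _ => Or.inr (inf_bot_eq _)

@[to_additive]
theorem isIsolated_top : (⊤ : Subgroup G).IsIsolated := fun x => Or.inl (mem_top x)

end Subgroup

namespace AddSubgroup

variable {A : Type*} [AddGroup A] {K : AddSubgroup A}

theorem isIsolated_toSubgroup_iff : (toSubgroup K).IsIsolated ↔ K.IsIsolated := by
  rw [Subgroup.isIsolated_iff_forall_zpow_mem, isIsolated_iff_forall_zsmul_mem]
  rfl

theorem IsIsolated.mem_of_nsmul_mem (hK : K.IsIsolated) {x : A} {n : ℕ} (hn : n • x ∈ K)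
    (h0 : n • x ≠ 0) : x ∈ K := by
  rw [← natCast_zsmul] at hn h0
  exact (isIsolated_iff_forall_zsmul_mem.1 hK x n hn).resolve_left h0

theorem isIsolated_of_forall_prime_nsmul_mem {p k : ℕ} (hp : p.Prime)
    (hexp : ∀ x : A, p ^ k • x = 0) (hK : ∀ y : A, p • y ∈ K → p • y = 0) : K.IsIsolated := by
  refine isIsolated_iff_forall_zsmul_mem.2 fun x n hn => ?_
  by_cases hpn : (p : ℤ) ∣ n
  · obtain ⟨n, rfl⟩ := hpn
    rw [mul_comm, mul_zsmul', natCast_zsmul] at hn ⊢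
    exact Or.inl (hK _ hn)
  · obtain ⟨a, b, hab⟩ : IsCoprime n ((p : ℤ) ^ k) :=
      ((Nat.prime_iff_prime_int.1 hp).coprime_iff_not_dvd.2 hpn).symm.pow_right
    have hx : x = a • n • x + b • (p ^ k • x) := by
      rw [← natCast_zsmul, Nat.cast_pow, smul_smul, smul_smul, ← add_zsmul, hab, one_zsmul]
    rw [hexp, smul_zero, add_zero] at hx
    exact Or.inr (hx ▸ K.zsmul_mem hn a)

end AddSubgroup

namespace LinearPMap

variable {R E F : Type*} [Ring R] [AddCommGroup E] [Module R E] [AddCommGroup F] [Module R F]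

theorem natCard_graph (f : E →ₗ.[R] F) : Nat.card f.graph = Nat.card f.domain := by
  refine (Nat.card_congr (Equiv.ofBijective (fun x => ⟨(x.1, f x), f.mem_graph x⟩) ⟨?_, ?_⟩)).symm
  · exact fun x y h => Subtype.ext (congrArg (fun z => z.1.1) h)
  · rintro ⟨z, hz⟩
    obtain ⟨y, hy⟩ := f.mem_graph_iff'.1 hz
    exact ⟨y, Subtype.ext hy⟩

end LinearPMap

section FiniteField

open scoped LinearAlgebra.Projectivization

variable {K E : Type*} [Field K] [AddCommGroup E] [Module K E] [Finite E]

theorem Module.natCard_dual (W : Type*) [AddCommGroup W] [Module K W] [Module.Finite K W] :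
    Nat.card (Module.Dual K W) = Nat.card W :=
  Nat.card_congr (Module.finBasis K W).toDualEquiv.toEquiv.symm

theorem Submodule.natCard_subtype_natCard_eq_natCard_self :
    Nat.card {D : Submodule K E // Nat.card D = Nat.card E} = 1 := by
  rw [Nat.card_eq_one_iff_exists]
  refine ⟨⟨⊤, AddSubgroup.card_top⟩, fun D => Subtype.ext ?_⟩
  exact Submodule.toAddSubgroup_injective (AddSubgroup.eq_top_of_card_eq _ D.2)

variable [Finite K]

theorem LinearPMap.natCard_subtype_natCard_domain_eq (n : ℕ) :
    Nat.card {f : E →ₗ.[K] K // Nat.card f.domain = n} =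
      Nat.card {D : Submodule K E // Nat.card D = n} * n := by
  have : Fintype {D : Submodule K E // Nat.card D = n} := Fintype.ofFinite _
  let e : {f : E →ₗ.[K] K // Nat.card f.domain = n} ≃
      Σ D : {D : Submodule K E // Nat.card D = n}, Module.Dual K D.1 :=
    { toFun f := ⟨⟨f.1.domain, f.2⟩, f.1.toFun⟩
      invFun x := ⟨⟨x.1.1, x.2⟩, x.1.2⟩
      left_inv _ := rfl
      right_inv _ := rfl }
  have : ∀ D : Submodule K E, Finite (Module.Dual K D) := fun _ => Module.finite_of_finite K
  rw [Nat.card_congr e, Nat.card_sigma]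
  simp only [Module.natCard_dual]
  rw [Finset.sum_congr rfl fun D _ => D.2]
  simp [Nat.card_eq_fintype_card]

theorem Submodule.natCard_subtype_natCard_eq_natCard_field :
    Nat.card {D : Submodule K E // Nat.card D = Nat.card K} = Nat.card (ℙ K E) := by
  refine (Nat.card_congr ((Projectivization.equivSubmodule K E).trans
    (Equiv.subtypeEquivRight fun D => ?_))).symm
  rw [Module.natCard_eq_pow_finrank (K := K) (V := D), Nat.pow_eq_self_iff Finite.one_lt_card]

end FiniteField

namespace ZMod

variable {n m : ℕ}

variable (n m) in
def embedPow : ZMod n →+ ZMod (n ^ m) :=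
  ZMod.lift n ⟨zmultiplesHom _ ((n ^ (m - 1) : ℕ) : ZMod (n ^ m)), by
    rw [zmultiplesHom_apply, natCast_zsmul, nsmul_eq_mul, ← Nat.cast_mul, ← pow_succ',
      ZMod.natCast_eq_zero_iff]
    exact pow_dvd_pow n (by omega)⟩

theorem embedPow_natCast (k : ℕ) : embedPow n m k = ((n ^ (m - 1) * k : ℕ) : ZMod (n ^ m)) := by
  rw [← Int.cast_natCast, embedPow, ZMod.lift_coe]
  simp [mul_comm]

variable [NeZero n]

theorem embedPow_injective (hm : 1 ≤ m) : Function.Injective (embedPow n m) := by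
  refine (injective_iff_map_eq_zero _).2 fun t ht => ?_
  rw [← ZMod.natCast_zmod_val t, embedPow_natCast, ZMod.natCast_eq_zero_iff,
    ← pow_sub_one_mul (by omega : m ≠ 0)] at ht
  rw [← ZMod.natCast_zmod_val t, ZMod.natCast_eq_zero_iff]
  exact Nat.dvd_of_mul_dvd_mul_left (pow_pos (Nat.pos_of_neZero n) _) ht

theorem exists_embedPow_eq (hm : 1 ≤ m) {c : ZMod (n ^ m)} (hc : n • c = 0) :
    ∃ t, embedPow n m t = c := by
  rw [← ZMod.natCast_zmod_val c, nsmul_eq_mul, ← Nat.cast_mul, ZMod.natCast_eq_zero_iff] at hc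
  have hc' : n * n ^ (m - 1) ∣ n * c.val := by rwa [← pow_succ', Nat.sub_add_cancel hm]
  obtain ⟨k, hk⟩ := Nat.dvd_of_mul_dvd_mul_left (Nat.pos_of_neZero n) hc'
  exact ⟨k, by rw [embedPow_natCast, ← hk, ZMod.natCast_zmod_val]⟩

theorem natCast_prime_ne_zero {p : ℕ} (hp : p.Prime) (hm : 2 ≤ m) : (p : ZMod (p ^ m)) ≠ 0 := by
  rw [Ne, ZMod.natCast_eq_zero_iff]
  nth_rw 2 [← pow_one p]
  rw [Nat.pow_dvd_pow_iff_le_right hp.one_lt]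
  omega

end ZMod

theorem Prod.mk_zero_eq_val_nsmul {α : Type*} [AddMonoid α] {n : ℕ} [NeZero n] (c : ZMod n) :
    ((0, c) : α × ZMod n) = c.val • (0, 1) := by
  ext <;> simp

theorem AddSubgroup.IsIsolated.mk_zero_one_mem {α : Type*} [AddGroup α] {n : ℕ} [NeZero n]
    {K : AddSubgroup (α × ZMod n)} (hK : K.IsIsolated) {c : ZMod n} (hc : (0, c) ∈ K)
    (hc0 : c ≠ 0) : (0, 1) ∈ K := by
  rw [Prod.mk_zero_eq_val_nsmul] at hc
  exact hK.mem_of_nsmul_mem hc (by rw [← Prod.mk_zero_eq_val_nsmul]; simpa using hc0)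

section ElementaryTimesCyclic

variable {p m : ℕ} {U : Type*} [AddCommGroup U]

variable (m) in
def torsionEmbedding : U × ZMod p →+ U × ZMod (p ^ m) :=
  (AddMonoidHom.id U).prodMap (ZMod.embedPow p m)

theorem torsionEmbedding_injective [NeZero p] (hm : 1 ≤ m) :
    Function.Injective (torsionEmbedding (U := U) (p := p) m) := by
  rw [torsionEmbedding, AddMonoidHom.coe_prodMap]
  exact Function.injective_id.prodMap (ZMod.embedPow_injective hm)

variable [Module (ZMod p) U]

theorem prime_nsmul_eq (x : U × ZMod (p ^ m)) : p • x = (0, p • x.2) :=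
  Prod.ext (ZModModule.char_nsmul_eq_zero p x.1) rfl

theorem prime_pow_nsmul_eq_zero (hm : 1 ≤ m) (x : U × ZMod (p ^ m)) : p ^ m • x = 0 := by
  obtain ⟨k, hk⟩ : p ∣ p ^ m := dvd_pow_self p (by omega)
  refine Prod.ext ?_ (by simp)
  simp [hk, mul_nsmul', ZModModule.char_nsmul_eq_zero]

variable [hp : Fact p.Prime]

namespace AddSubgroup

variable {K : AddSubgroup (U × ZMod (p ^ m))}

theorem IsIsolated.eq_top_of_mk_zero_one_mem (hm : 2 ≤ m) (hK : K.IsIsolated) (h : (0, 1) ∈ K) :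
    K = ⊤ := by
  have hC (c : ZMod (p ^ m)) : (0, c) ∈ K := by
    rw [Prod.mk_zero_eq_val_nsmul]
    exact K.nsmul_mem h _
  refine eq_top_iff.2 fun x _ => ?_
  have hpx : p • (x.1, (1 : ZMod (p ^ m))) = (0, (p : ZMod (p ^ m))) := by
    rw [prime_nsmul_eq]; simp
  have hx : (x.1, 1) ∈ K := hK.mem_of_nsmul_mem (hpx ▸ hC _)
    (by simpa [hpx] using ZMod.natCast_prime_ne_zero hp.out hm)
  simpa using K.add_mem hx (hC (x.2 - 1))

theorem isIsolated_and_ne_top_iff_forall_mk_zero_mem (hm : 2 ≤ m) :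
    K.IsIsolated ∧ K ≠ ⊤ ↔ ∀ c : ZMod (p ^ m), (0, c) ∈ K → c = 0 := by
  constructor
  · rintro ⟨hK, hne⟩ c hc
    by_contra hc0
    exact hne (hK.eq_top_of_mk_zero_one_mem hm (hK.mk_zero_one_mem hc hc0))
  · intro hK
    have : Fact (1 < p ^ m) := ⟨Nat.one_lt_pow (by omega) hp.out.one_lt⟩
    refine ⟨isIsolated_of_forall_prime_nsmul_mem hp.out (prime_pow_nsmul_eq_zero (by omega))
      fun y hy => ?_, fun htop => one_ne_zero (hK 1 (htop ▸ mem_top _))⟩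
    rw [prime_nsmul_eq] at hy ⊢
    rw [hK _ hy]
    rfl

end AddSubgroup

variable (m) in
def graphSubgroup (f : U →ₗ.[ZMod p] ZMod p) : AddSubgroup (U × ZMod (p ^ m)) :=
  f.graph.toAddSubgroup.map (torsionEmbedding m)

theorem card_graphSubgroup (hm : 1 ≤ m) (f : U →ₗ.[ZMod p] ZMod p) :
    Nat.card (graphSubgroup m f) = Nat.card f.domain := by
  rw [graphSubgroup, AddSubgroup.card_map_of_injective (torsionEmbedding_injective hm)]
  exact f.natCard_graph

theorem graphSubgroup_injective (hm : 1 ≤ m) :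
    Function.Injective (graphSubgroup (U := U) (p := p) m) := fun _ _ h =>
  LinearPMap.eq_of_eq_graph (Submodule.toAddSubgroup_injective
    (AddSubgroup.map_injective (torsionEmbedding_injective hm) h))

theorem eq_zero_of_mk_zero_mem_graphSubgroup {f : U →ₗ.[ZMod p] ZMod p} {c : ZMod (p ^ m)}
    (hc : (0, c) ∈ graphSubgroup m f) : c = 0 := by
  obtain ⟨⟨u, t⟩, hut, he⟩ := hc
  simp only [torsionEmbedding, AddMonoidHom.coe_prodMap, Prod.map_apply, AddMonoidHom.id_apply,
    Prod.mk.injEq] at he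
  obtain ⟨rfl, rfl⟩ := he
  rw [f.graph_fst_eq_zero_snd hut rfl, map_zero]

theorem exists_graphSubgroup_eq (hm : 1 ≤ m) {K : AddSubgroup (U × ZMod (p ^ m))}
    (hK : ∀ c, (0, c) ∈ K → c = 0) : ∃ f : U →ₗ.[ZMod p] ZMod p, graphSubgroup m f = K := by
  set g := AddSubgroup.toZModSubmodule p (K.comap (torsionEmbedding m))
  have hg : ∀ x ∈ g, x.1 = 0 → x.2 = 0 := by
    rintro ⟨u, t⟩ hx (rfl : u = 0)
    exact ZMod.embedPow_injective hm ((hK _ hx).trans (map_zero _).symm)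
  refine ⟨g.toLinearPMap, ?_⟩
  rw [graphSubgroup, g.toLinearPMap_graph_eq hg, AddSubgroup.toZModSubmodule_toAddSubgroup]
  refine AddSubgroup.map_comap_eq_self fun x hx => ?_
  have h2 : p • x.2 = 0 := hK _ (by rw [← prime_nsmul_eq]; exact K.nsmul_mem hx p)
  obtain ⟨t, ht⟩ := ZMod.exists_embedPow_eq hm h2
  exact ⟨(x.1, t), by simp [torsionEmbedding, ht]⟩

theorem isIsolated_and_ne_top_iff_exists_graphSubgroup (hm : 2 ≤ m)
    {K : AddSubgroup (U × ZMod (p ^ m))} :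
    K.IsIsolated ∧ K ≠ ⊤ ↔ ∃ f : U →ₗ.[ZMod p] ZMod p, graphSubgroup m f = K := by
  rw [AddSubgroup.isIsolated_and_ne_top_iff_forall_mk_zero_mem hm]
  refine ⟨exists_graphSubgroup_eq (by omega), ?_⟩
  rintro ⟨f, rfl⟩ c hc
  exact eq_zero_of_mk_zero_mem_graphSubgroup hc

theorem natCard_setOf_isIsolated_natCard_eq (hm : 2 ≤ m) {n : ℕ}
    (hn : n ≠ Nat.card (U × ZMod (p ^ m))) :
    Nat.card {K : AddSubgroup (U × ZMod (p ^ m)) | K.IsIsolated ∧ Nat.card K = n} =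
      Nat.card {f : U →ₗ.[ZMod p] ZMod p // Nat.card f.domain = n} := by
  refine (Nat.card_congr (Equiv.ofBijective (fun f => ⟨graphSubgroup m f.1,
    ((isIsolated_and_ne_top_iff_exists_graphSubgroup hm).2 ⟨f.1, rfl⟩).1,
    (card_graphSubgroup (by omega) f.1).trans f.2⟩) ⟨fun f g h => ?_, ?_⟩)).symm
  · exact Subtype.ext (graphSubgroup_injective (by omega) (congrArg Subtype.val h))
  · rintro ⟨K, hK, hKn⟩
    have hne : K ≠ ⊤ := by
      rintro rfl
      exact hn (hKn ▸ AddSubgroup.card_top)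
    obtain ⟨f, rfl⟩ := (isIsolated_and_ne_top_iff_exists_graphSubgroup hm).1 ⟨hK, hne⟩
    exact ⟨⟨f, (card_graphSubgroup (by omega) f).symm.trans hKn⟩, rfl⟩

theorem natCard_dvd_of_isIsolated [Finite U] (hm : 2 ≤ m) {K : AddSubgroup (U × ZMod (p ^ m))}
    (hK : K.IsIsolated) (htop : K ≠ ⊤) : Nat.card K ∣ Nat.card U := by
  obtain ⟨f, rfl⟩ := (isIsolated_and_ne_top_iff_exists_graphSubgroup hm).1 ⟨hK, htop⟩
  rw [card_graphSubgroup (by omega)]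
  exact AddSubgroup.card_addSubgroup_dvd_card f.domain.toAddSubgroup

end ElementaryTimesCyclic

section RankTwo

variable {p m : ℕ}

theorem natCard_zmod_prod : Nat.card ((ZMod p × ZMod p) × ZMod (p ^ m)) = p ^ (m + 2) := by
  simp only [Nat.card_prod, Nat.card_zmod]
  ring

variable [hp : Fact p.Prime]

theorem natCard_setOf_isIsolated_natCard_eq_prime (hm : 2 ≤ m) :
    Nat.card {K : AddSubgroup ((ZMod p × ZMod p) × ZMod (p ^ m)) |
      K.IsIsolated ∧ Nat.card K = p} = p ^ 2 + p := by
  have hlines := LinearPMap.natCard_subtype_natCard_domain_eq (K := ZMod p)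
    (E := ZMod p × ZMod p) (Nat.card (ZMod p))
  rw [Submodule.natCard_subtype_natCard_eq_natCard_field,
    Projectivization.card_of_finrank_two _ _ (by simp), Nat.card_zmod] at hlines
  have hlt : p < p ^ (m + 2) := lt_self_pow₀ hp.out.one_lt (by omega)
  rw [natCard_setOf_isIsolated_natCard_eq (p := p) hm (by rw [natCard_zmod_prod]; exact hlt.ne),
    hlines]
  ring

theorem natCard_setOf_isIsolated_natCard_eq_sq (hm : 2 ≤ m) :
    Nat.card {K : AddSubgroup ((ZMod p × ZMod p) × ZMod (p ^ m)) |
      K.IsIsolated ∧ Nat.card K = p ^ 2} = p ^ 2 := by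
  have hplanes := LinearPMap.natCard_subtype_natCard_domain_eq (K := ZMod p)
    (E := ZMod p × ZMod p) (Nat.card (ZMod p × ZMod p))
  rw [Submodule.natCard_subtype_natCard_eq_natCard_self, one_mul, Nat.card_prod, Nat.card_zmod,
    ← sq] at hplanes
  have hlt : p ^ 2 < p ^ (m + 2) := Nat.pow_lt_pow_right hp.out.one_lt (by omega)
  rw [natCard_setOf_isIsolated_natCard_eq (p := p) hm (by rw [natCard_zmod_prod]; exact hlt.ne),
    hplanes]

theorem eq_bot_or_eq_top_or_natCard_of_isIsolated (hm : 2 ≤ m)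
    {K : AddSubgroup ((ZMod p × ZMod p) × ZMod (p ^ m))} (hK : K.IsIsolated) :
    K = ⊥ ∨ K = ⊤ ∨ Nat.card K = p ∨ Nat.card K = p ^ 2 := by
  by_cases htop : K = ⊤
  · exact Or.inr (Or.inl htop)
  obtain ⟨k, hk, hcard⟩ := (Nat.dvd_prime_pow hp.out).1 (show Nat.card K ∣ p ^ 2 by
    simpa [sq] using natCard_dvd_of_isIsolated hm hK htop)
  interval_cases k
  · exact Or.inl (AddSubgroup.eq_bot_of_card_eq _ (by rw [hcard, pow_zero]))
  · simp [hcard]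
  · simp [hcard]

theorem setOf_isIsolated_eq (hm : 2 ≤ m) :
    {K : AddSubgroup ((ZMod p × ZMod p) × ZMod (p ^ m)) | K.IsIsolated} =
      ({⊥, ⊤} : Set (AddSubgroup _)) ∪ {K | K.IsIsolated ∧ Nat.card K = p} ∪
        {K | K.IsIsolated ∧ Nat.card K = p ^ 2} := by
  ext K
  simp only [Set.mem_ofPred_eq, Set.mem_union, Set.mem_insert_iff, Set.mem_singleton_iff]
  refine ⟨fun hK => ?_, ?_⟩
  · rcases eq_bot_or_eq_top_or_natCard_of_isIsolated hm hK with h | h | h | h <;> tauto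
  · rintro (((rfl | rfl) | ⟨hK, -⟩) | ⟨hK, -⟩)
    exacts [AddSubgroup.isIsolated_bot, AddSubgroup.isIsolated_top, hK, hK]

theorem natCard_setOf_isIsolated (hm : 2 ≤ m) :
    Nat.card {K : AddSubgroup ((ZMod p × ZMod p) × ZMod (p ^ m)) | K.IsIsolated} =
      2 * p ^ 2 + p + 2 := by
  have h1 : 1 < p := hp.out.one_lt
  have h2 : p < p ^ 2 := lt_self_pow₀ h1 one_lt_two
  have h3 : p ^ 2 < p ^ (m + 2) := Nat.pow_lt_pow_right h1 (by omega)
  have htop : Nat.card (⊤ : AddSubgroup ((ZMod p × ZMod p) × ZMod (p ^ m))) = p ^ (m + 2) := by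
    rw [AddSubgroup.card_top, natCard_zmod_prod]
  rw [setOf_isIsolated_eq hm, Nat.card_coe_set_eq, Set.ncard_union_eq, Set.ncard_union_eq,
    Set.ncard_pair, ← Nat.card_coe_set_eq, ← Nat.card_coe_set_eq,
    natCard_setOf_isIsolated_natCard_eq_prime hm, natCard_setOf_isIsolated_natCard_eq_sq hm]
  · ring
  · exact bot_ne_top
  · refine Set.disjoint_left.2 ?_
    rintro K (rfl | rfl) ⟨-, hK⟩
    · rw [AddSubgroup.card_bot] at hK; omega
    · omega
  · refine Set.disjoint_left.2 ?_
    rintro K ((rfl | rfl) | ⟨-, hK⟩) ⟨-, hK'⟩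
    · rw [AddSubgroup.card_bot] at hK'; omega
    · omega
    · omega

end RankTwo

section Multiplicative

variable {p m : ℕ}

variable (p m) in
def multiplicativeEquiv : Multiplicative ((ZMod p × ZMod p) × ZMod (p ^ m)) ≃*
    Multiplicative (ZMod p) × Multiplicative (ZMod p) × Multiplicative (ZMod (p ^ m)) :=
  ((MulEquiv.prodMultiplicative _ _).trans
    ((MulEquiv.prodMultiplicative _ _).prodCongr (MulEquiv.refl _))).trans MulEquiv.prodAssoc

variable (p m) in
def subgroupOrderIso : AddSubgroup ((ZMod p × ZMod p) × ZMod (p ^ m)) ≃o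
    Subgroup (Multiplicative (ZMod p) × Multiplicative (ZMod p) × Multiplicative (ZMod (p ^ m))) :=
  AddSubgroup.toSubgroup.trans (multiplicativeEquiv p m).mapSubgroup

theorem isIsolated_subgroupOrderIso_iff {K : AddSubgroup ((ZMod p × ZMod p) × ZMod (p ^ m))} :
    (subgroupOrderIso p m K).IsIsolated ↔ K.IsIsolated :=
  (Subgroup.isIsolated_map_mulEquiv_iff _).trans AddSubgroup.isIsolated_toSubgroup_iff

theorem card_subgroupOrderIso (K : AddSubgroup ((ZMod p × ZMod p) × ZMod (p ^ m))) :
    Nat.card (subgroupOrderIso p m K) = Nat.card K :=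
  Subgroup.card_map_of_injective (multiplicativeEquiv p m).injective

end Multiplicative

theorem stmt15 {p : ℕ} [Fact p.Prime] {m : ℕ} (hm : 2 ≤ m) :
    Nat.card {H : Subgroup (Multiplicative (ZMod p) × Multiplicative (ZMod p) ×
        Multiplicative (ZMod (p ^ m))) | H.IsIsolated} = 2 * p ^ 2 + p + 2 ∧
    Nat.card {H : Subgroup (Multiplicative (ZMod p) × Multiplicative (ZMod p) ×
        Multiplicative (ZMod (p ^ m))) | H.IsIsolated ∧ Nat.card H = p} = p ^ 2 + p ∧
    Nat.card {H : Subgroup (Multiplicative (ZMod p) × Multiplicative (ZMod p) ×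
        Multiplicative (ZMod (p ^ m))) | H.IsIsolated ∧ Nat.card H = p ^ 2} = p ^ 2 := by
  have transfer (P : Subgroup (Multiplicative (ZMod p) × Multiplicative (ZMod p) ×
      Multiplicative (ZMod (p ^ m))) → Prop) :
      Nat.card {H | P H} = Nat.card {K | P (subgroupOrderIso p m K)} :=
    Nat.card_congr (subgroupOrderIso p m).toEquiv.subtypeEquivOfSubtype.symm
  simp only [transfer, isIsolated_subgroupOrderIso_iff, card_subgroupOrderIso]
  exact ⟨natCard_setOf_isIsolated hm, natCard_setOf_isIsolated_natCard_eq_prime hm,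
    natCard_setOf_isIsolated_natCard_eq_sq hm⟩
end

section
/- For the cyclic group Z_{p^n} with n ≥ 1 and p prime, ψ(Z_{p^n}) = (p^{2n+1} + 1)/(p + 1), where ψ denotes the sum of element orders. (Equivalently, (p+1)·ψ(Z_{p^n}) = p^{2n+1} + 1.) -/
open Finset in
lemma psi_cyclic (G : Type*) [Group G] [Fintype G] [IsCyclic G] :
    psi G = ∑ d ∈ (Fintype.card G).divisors, d * Nat.totient d := by
  classical
  have hmaps : ∀ x : G, x ∈ (univ : Finset G) → orderOf x ∈ (Fintype.card G).divisors := by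
    intro x _
    exact Nat.mem_divisors.2 ⟨orderOf_dvd_card, Fintype.card_ne_zero⟩
  rw [psi, ← Finset.sum_fiberwise_of_maps_to hmaps]
  refine Finset.sum_congr rfl fun d hd => ?_
  have hcard : #{a : G | orderOf a = d} = Nat.totient d :=
    IsCyclic.card_orderOf_eq_totient (Nat.mem_divisors.1 hd).1
  calc ∑ x ∈ univ.filter (fun x => orderOf x = d), orderOf x
      = ∑ x ∈ univ.filter (fun x => orderOf x = d), d :=
        Finset.sum_congr rfl fun x hx => (Finset.mem_filter.1 hx).2
    _ = d * Nat.totient d := by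
        rw [Finset.sum_const, smul_eq_mul, mul_comm]
        congr 1

lemma key (p : ℕ) (hp : p.Prime) (n : ℕ) :
    (p + 1) * ∑ k ∈ Finset.range (n + 1), p ^ k * Nat.totient (p ^ k) =
      p ^ (2 * n + 1) + 1 := by
  induction n with
  | zero => simp
  | succ n ih =>
    rw [Finset.sum_range_succ, Nat.mul_add, ih, Nat.totient_prime_pow_succ hp]
    have h1 : 1 ≤ p := hp.one_le
    zify [h1]
    push_cast
    ring_nf

theorem stmt16 {p : ℕ} [Fact p.Prime] {n : ℕ} (hn : 1 ≤ n) :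
    (p + 1) * psi (Multiplicative (ZMod (p ^ n))) = p ^ (2 * n + 1) + 1 := by
  have hp := Fact.out (p := p.Prime)
  have hcard : Fintype.card (Multiplicative (ZMod (p ^ n))) = p ^ n := by
    simp [ZMod.card]
  rw [psi_cyclic, hcard, Nat.sum_divisors_prime_pow hp, key p hp n]
end
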